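/- arXiv:math/0212140 — 2 statements merged into one kernel-verified Lean document; each statement's English description precedes it below -/
import Mathlib

section
/- Let P be a lattice polygon and let M := ((1/2)ℤ² \ ℤ²) ∩ int(P) be the set of half-integer non-integer points in the interior of P. In any unimodular triangulation of P, the map sending an inner edge to its midpoint is a bijection between the set E' of inner (non-boundary) edges of the triangulation and M. -/
noncomputable section

/-- Points of the plane `ℝ²`. -/
abbrev Pt := ℝ × ℝ

/-- The embedding of the lattice `ℤ²` into `ℝ²`. -/
def toPt (v : ℤ × ℤ) : Pt := ((v.1 : ℝ), (v.2 : ℝ))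

/-- The integer points of `ℝ²`. -/
def intPts : Set Pt := Set.range toPt

/-- The half-integer points `(1/2)ℤ²` of `ℝ²`. -/
def halfPts : Set Pt := {p | (∃ a : ℤ, p.1 = (a : ℝ) / 2) ∧ (∃ b : ℤ, p.2 = (b : ℝ) / 2)}

/-- The convex hull in `ℝ²` of a finite set of lattice points. -/
def hull (s : Finset (ℤ × ℤ)) : Set Pt := convexHull ℝ (toPt '' ↑s)

/-- A unimodular (= maximal lattice) triangulation of a closed region `R ⊆ ℝ²`:
a finite family of lattice triangles of area `1/2` covering `R`, any two of which
meet in a common face, and whose vertex set is exactly `R ∩ ℤ²`. -/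
structure UnimodularTriangulation (R : Set Pt) where
  /-- the triangles, each given by its (three-element) vertex set -/
  tris : Finset (Finset (ℤ × ℤ))
  card3 : ∀ T ∈ tris, T.card = 3
  /-- each triangle is unimodular, i.e. has area 1/2 -/
  unimodular : ∀ T ∈ tris, ∀ a ∈ T, ∀ b ∈ T, ∀ c ∈ T,
    a ≠ b → a ≠ c → b ≠ c →
    |(b.1 - a.1) * (c.2 - a.2) - (c.1 - a.1) * (b.2 - a.2)| = 1
  /-- the triangles cover exactly `R` -/
  cover : ⋃ T ∈ tris, hull T = R
  /-- any two triangles intersect in a common face -/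
  glue : ∀ T₁ ∈ tris, ∀ T₂ ∈ tris, hull T₁ ∩ hull T₂ = hull (T₁ ∩ T₂)
  /-- the vertex set is exactly `R ∩ ℤ²` -/
  vertices : ∀ v : ℤ × ℤ, (∃ T ∈ tris, v ∈ T) ↔ toPt v ∈ R

/-- The edges of a triangulation: the two-element subsets of its triangles. -/
def UnimodularTriangulation.edges {R : Set Pt} (𝒯 : UnimodularTriangulation R) :
    Finset (Finset (ℤ × ℤ)) :=
  𝒯.tris.biUnion fun T => T.powersetCard 2

/-- The segment in `ℝ²` spanned by an edge. -/
def edgeSeg (e : Finset (ℤ × ℤ)) : Set Pt := convexHull ℝ (toPt '' ↑e)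

open scoped Classical in
/-- The inner (non-boundary) edges of a triangulation of `R`: those edges whose
segment is not contained in the boundary (topological frontier) of `R`. -/
def UnimodularTriangulation.innerEdges {R : Set Pt} (𝒯 : UnimodularTriangulation R) :
    Finset (Finset (ℤ × ℤ)) :=
  𝒯.edges.filter fun e => ¬ (edgeSeg e ⊆ frontier R)

/-- The midpoint of an edge `{u, v}`. -/
def edgeMid (e : Finset (ℤ × ℤ)) : Pt := (2 : ℝ)⁻¹ • ∑ v ∈ e, toPt v

/-- The grid rectangle `P_{m,n} = [0,m] × [0,n] ⊆ ℝ²`. -/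
def gridRegion (m n : ℕ) : Set Pt := Set.Icc ((0, 0) : Pt) ((m : ℝ), (n : ℝ))

/-- `f m n` is the number of unimodular triangulations of the grid rectangle `P_{m,n}`. -/
def f (m n : ℕ) : ℕ := Nat.card (UnimodularTriangulation (gridRegion m n))

/-- A lattice polygon: a simple closed polygon in `ℝ²` with vertices in `ℤ²`,
given by a cyclic sequence of at least three pairwise distinct vertices whose
consecutive sides intersect exactly in their common endpoints. -/
structure LatticePolygon where
  /-- the number of vertices -/
  n : ℕ
  hn : 3 ≤ n
  /-- the cyclic sequence of vertices -/
  v : ZMod n → ℤ × ℤ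
  inj : Function.Injective v
  /-- simplicity: two distinct sides meet exactly in their common endpoints -/
  simple : ∀ i j : ZMod n, i ≠ j →
    segment ℝ (toPt (v i)) (toPt (v (i + 1))) ∩ segment ℝ (toPt (v j)) (toPt (v (j + 1)))
      = toPt '' (({v i, v (i + 1)} : Set (ℤ × ℤ)) ∩ {v j, v (j + 1)})

/-- The boundary of a lattice polygon: the union of its sides. -/
def LatticePolygon.bdry (P : LatticePolygon) : Set Pt :=
  ⋃ i : ZMod P.n, segment ℝ (toPt (P.v i)) (toPt (P.v (i + 1)))

/-- The closed region enclosed by a lattice polygon: its boundary together with the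
bounded connected components of the complement of the boundary. -/
def LatticePolygon.region (P : LatticePolygon) : Set Pt :=
  P.bdry ∪ {x | x ∉ P.bdry ∧ Bornology.IsBounded (connectedComponentIn P.bdryᶜ x)}

/-- `M(P)`: the half-integer non-integer points in the interior of the polygon `P`. -/
def Mset (P : LatticePolygon) : Set Pt := (halfPts \ intPts) ∩ interior P.region

/-- The lexicographic order `≺` on `ℝ²`: compare `y`-coordinates first, then `x`. -/
def plex (p q : Pt) : Prop := p.2 < q.2 ∨ (p.2 = q.2 ∧ p.1 < q.1)

/-- 2x2 determinant of two plane vectors. -/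
def detP (e f : Pt) : ℝ := e.1 * f.2 - e.2 * f.1

lemma cramer (e f w : Pt) (h : detP e f ≠ 0) :
    w = (detP w f / detP e f) • e + (detP e w / detP e f) • f := by
  unfold detP at *
  ext <;> simp only [Prod.fst_add, Prod.snd_add, Prod.smul_fst, Prod.smul_snd, smul_eq_mul] <;>
    rw [div_mul_eq_mul_div, div_mul_eq_mul_div, ← add_div, eq_div_iff h] <;> ring

lemma detP_comb_left (e f : Pt) (s t : ℝ) : detP (s • e + t • f) f = s * detP e f := by
  unfold detP
  simp only [Prod.fst_add, Prod.snd_add, Prod.smul_fst, Prod.smul_snd, smul_eq_mul]; ring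

lemma detP_comb_right (e f : Pt) (s t : ℝ) : detP e (s • e + t • f) = t * detP e f := by
  unfold detP
  simp only [Prod.fst_add, Prod.snd_add, Prod.smul_fst, Prod.smul_snd, smul_eq_mul]; ring

lemma coords_unique {e f : Pt} (h : detP e f ≠ 0) {s t s' t' : ℝ}
    (heq : s • e + t • f = s' • e + t' • f) : s = s' ∧ t = t' := by
  constructor
  · have := congrArg (fun w => detP w f) heq
    simpa [detP_comb_left, mul_left_inj' h] using this
  · have := congrArg (fun w => detP e w) heq
    simpa [detP_comb_right, mul_left_inj' h] using this

lemma mem_hull3 {A B C p : Pt} :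
    p ∈ convexHull ℝ ({A, B, C} : Set Pt) ↔
      ∃ s t : ℝ, 0 ≤ s ∧ 0 ≤ t ∧ s + t ≤ 1 ∧ p = A + s • (B - A) + t • (C - A) := by
  rw [convexHull_insert ⟨B, by simp⟩]
  constructor
  · rintro hp
    rw [convexHull_pair] at hp
    rw [mem_convexJoin] at hp
    obtain ⟨a, ha, z, hz, hpz⟩ := hp
    rw [Set.mem_singleton_iff] at ha; subst ha
    rw [segment_eq_image'] at hz
    rw [segment_eq_image'] at hpz
    obtain ⟨t, ht, rfl⟩ := hz
    obtain ⟨r, hr, rfl⟩ := hpz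
    refine ⟨r * (1 - t), r * t, by nlinarith [ht.1, ht.2, hr.1, hr.2],
      by nlinarith [ht.1, hr.1], by nlinarith [hr.2], ?_⟩
    module
  · rintro ⟨s, t, hs, ht, hst, rfl⟩
    rw [convexHull_pair, mem_convexJoin]
    rcases eq_or_lt_of_le (add_nonneg hs ht) with h0 | h0
    · refine ⟨A, Set.mem_singleton A, ?_⟩
      refine ⟨B, left_mem_segment ℝ B C, ?_⟩
      have hs0 : s = 0 := by linarith
      have ht0 : t = 0 := by linarith
      rw [hs0, ht0]
      simpa using left_mem_segment ℝ A B
    · refine ⟨A, Set.mem_singleton A, ?_⟩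
      refine ⟨B + (t / (s + t)) • (C - B), ?_, ?_⟩
      · rw [segment_eq_image']
        exact ⟨t / (s + t), ⟨by positivity, by rw [div_le_one h0]; linarith⟩, rfl⟩
      · rw [segment_eq_image']
        refine ⟨s + t, ⟨le_of_lt h0, hst⟩, ?_⟩
        have hne : s + t ≠ 0 := ne_of_gt h0
        match_scalars <;> field_simp <;> ring

/-- integer determinant of triangle a b c -/
def intDet (a b c : ℤ × ℤ) : ℤ := (b.1 - a.1) * (c.2 - a.2) - (c.1 - a.1) * (b.2 - a.2)

lemma detP_toPt (a b c : ℤ × ℤ) :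
    detP (toPt b - toPt a) (toPt c - toPt a) = (intDet a b c : ℝ) := by
  unfold detP intDet toPt
  push_cast
  simp only [Prod.fst_sub, Prod.snd_sub]
  ring

lemma toPt_injective : Function.Injective toPt := by
  rintro ⟨a1, a2⟩ ⟨b1, b2⟩ h
  unfold toPt at h
  simp only [Prod.mk.injEq] at h ⊢
  exact_mod_cast h

/-- the midpoint of two lattice points -/
def midPt (u v : ℤ × ℤ) : Pt := (2 : ℝ)⁻¹ • (toPt u + toPt v)

lemma midPt_comm (u v : ℤ × ℤ) : midPt u v = midPt v u := by
  unfold midPt; rw [add_comm]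

lemma midPt_eq_iff {u v p q : ℤ × ℤ} (h : midPt u v = midPt p q) : u + v = p + q := by
  unfold midPt toPt at h
  have h2 := congrArg (fun w : Pt => (2:ℝ) • w) h
  simp only [smul_smul] at h2
  norm_num at h2
  obtain ⟨h1, h2'⟩ : (u.1 : ℝ) + v.1 = p.1 + q.1 ∧ (u.2 : ℝ) + v.2 = p.2 + q.2 := h2
  have : u.1 + v.1 = p.1 + q.1 := by exact_mod_cast h1
  have : u.2 + v.2 = p.2 + q.2 := by exact_mod_cast h2'
  ext <;> simp_all [Prod.fst_add, Prod.snd_add]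


lemma halfPts_two_smul {p : Pt} (hp : p ∈ halfPts) (a : ℤ × ℤ) :
    ∃ w : ℤ × ℤ, (2 : ℝ) • (p - toPt a) = toPt w := by
  obtain ⟨⟨x, hx⟩, ⟨y, hy⟩⟩ := hp
  refine ⟨(x - 2 * a.1, y - 2 * a.2), ?_⟩
  unfold toPt
  ext
  · simp only [Prod.smul_fst, Prod.fst_sub, smul_eq_mul, hx]; push_cast; ring
  · simp only [Prod.smul_snd, Prod.snd_sub, smul_eq_mul, hy]; push_cast; ring

lemma intPts_comb (a b c : ℤ × ℤ) (m n : ℤ) :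
    toPt a + (m : ℝ) • (toPt b - toPt a) + (n : ℝ) • (toPt c - toPt a) ∈ intPts := by
  refine ⟨(a.1 + m * (b.1 - a.1) + n * (c.1 - a.1), a.2 + m * (b.2 - a.2) + n * (c.2 - a.2)), ?_⟩
  unfold toPt
  ext
  · simp only [Prod.fst_add, Prod.smul_fst, Prod.fst_sub, smul_eq_mul]; push_cast; ring
  · simp only [Prod.snd_add, Prod.smul_snd, Prod.snd_sub, smul_eq_mul]; push_cast; ring

lemma detP_int_vec (u : ℤ × ℤ) (a c : ℤ × ℤ) :
    detP (toPt u) (toPt c - toPt a) = ((u.1 * (c.2 - a.2) - u.2 * (c.1 - a.1) : ℤ) : ℝ) := by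
  simp only [detP, toPt, Prod.fst_sub, Prod.snd_sub]
  push_cast
  ring

lemma detP_int_vec' (u : ℤ × ℤ) (a c : ℤ × ℤ) :
    detP (toPt c - toPt a) (toPt u) = ((-(u.1 * (c.2 - a.2) - u.2 * (c.1 - a.1)) : ℤ) : ℝ) := by
  simp only [detP, toPt, Prod.fst_sub, Prod.snd_sub]
  push_cast
  ring

/-- In a unimodular lattice triangle, every half-integer non-integer point of the hull
is the midpoint of one of the three edges. -/
lemma half_in_hull {a b c : ℤ × ℤ} (hD : |intDet a b c| = 1) {p : Pt}
    (hp : p ∈ convexHull ℝ ({toPt a, toPt b, toPt c} : Set Pt))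
    (hhalf : p ∈ halfPts) (hint : p ∉ intPts) :
    p = midPt a b ∨ p = midPt a c ∨ p = midPt b c := by
  obtain ⟨s, t, hs, ht, hst, hpe⟩ := mem_hull3.1 hp
  set A := toPt a with hA
  set B := toPt b with hB
  set C := toPt c with hC
  have hDR : detP (B - A) (C - A) = (intDet a b c : ℝ) := detP_toPt a b c
  have hD1 : intDet a b c = 1 ∨ intDet a b c = -1 := by
    rcases abs_eq (by norm_num : (0:ℤ) ≤ 1) |>.mp hD with h | h
    · exact Or.inl h
    · exact Or.inr h
  have hD0 : detP (B - A) (C - A) ≠ 0 := by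
    rw [hDR]; rcases hD1 with h | h <;> rw [h] <;> norm_num
  have hcomb : p - A = s • (B - A) + t • (C - A) := by rw [hpe]; abel
  obtain ⟨w, hw⟩ := halfPts_two_smul hhalf a
  -- 2 s * D and 2 t * D are integers
  have hkey : (2:ℝ) • (p - toPt a) = (2 * s) • (B - A) + (2 * t) • (C - A) := by
    rw [← hA, hcomb]; module
  have h2s : detP (toPt w) (C - A) = (2 * s) * detP (B - A) (C - A) := by
    rw [← hw, hkey, detP_comb_left]
  have h2t : detP (B - A) (toPt w) = (2 * t) * detP (B - A) (C - A) := by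
    rw [← hw, hkey, detP_comb_right]
  -- extract integers m n with (m:ℝ) = 2 s, (n:ℝ) = 2 t
  obtain ⟨m, hm⟩ : ∃ m : ℤ, (m : ℝ) = 2 * s := by
    rcases hD1 with h | h
    · refine ⟨w.1 * (c.2 - a.2) - w.2 * (c.1 - a.1), ?_⟩
      have := h2s; rw [detP_int_vec w a c, hDR, h] at this; push_cast at this ⊢; linarith
    · refine ⟨-(w.1 * (c.2 - a.2) - w.2 * (c.1 - a.1)), ?_⟩
      have := h2s; rw [detP_int_vec w a c, hDR, h] at this; push_cast at this ⊢; linarith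
  obtain ⟨n, hn⟩ : ∃ n : ℤ, (n : ℝ) = 2 * t := by
    rcases hD1 with h | h
    · refine ⟨-(w.1 * (b.2 - a.2) - w.2 * (b.1 - a.1)), ?_⟩
      have := h2t; rw [detP_int_vec' w a b, hDR, h] at this; push_cast at this ⊢; linarith
    · refine ⟨w.1 * (b.2 - a.2) - w.2 * (b.1 - a.1), ?_⟩
      have := h2t; rw [detP_int_vec' w a b, hDR, h] at this; push_cast at this ⊢; linarith
  have hm0 : 0 ≤ m := by have : (0:ℝ) ≤ (m:ℝ) := by rw [hm]; linarith
                         exact_mod_cast this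
  have hn0 : 0 ≤ n := by have : (0:ℝ) ≤ (n:ℝ) := by rw [hn]; linarith
                         exact_mod_cast this
  have hmn : m + n ≤ 2 := by
    have : (m:ℝ) + (n:ℝ) ≤ 2 := by rw [hm, hn]; linarith
    exact_mod_cast this
  -- not both even
  have hnotint : ¬ (2 ∣ m) ∨ ¬ (2 ∣ n) := by
    by_contra hcon
    push_neg at hcon
    obtain ⟨⟨m', hm'⟩, ⟨n', hn'⟩⟩ := hcon
    apply hint
    have hsm : s = (m' : ℝ) := by
      have : ((2 * m' : ℤ) : ℝ) = 2 * s := by rw [← hm']; exact hm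
      push_cast at this; linarith
    have htn : t = (n' : ℝ) := by
      have : ((2 * n' : ℤ) : ℝ) = 2 * t := by rw [← hn']; exact hn
      push_cast at this; linarith
    rw [hpe, hsm, htn]
    exact intPts_comb a b c m' n'
  -- case analysis
  have hcases : (m = 1 ∧ n = 0) ∨ (m = 0 ∧ n = 1) ∨ (m = 1 ∧ n = 1) := by
    rcases hnotint with h | h <;> omega
  unfold midPt
  rcases hcases with ⟨h1, h2⟩ | ⟨h1, h2⟩ | ⟨h1, h2⟩
  · left
    rw [h1] at hm; rw [h2] at hn
    have hs' : s = 1/2 := by push_cast at hm; linarith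
    have ht' : t = 0 := by push_cast at hn; linarith
    rw [hpe, hs', ht', ← hA, ← hB]; module
  · right; left
    rw [h1] at hm; rw [h2] at hn
    have hs' : s = 0 := by push_cast at hm; linarith
    have ht' : t = 1/2 := by push_cast at hn; linarith
    rw [hpe, hs', ht', ← hA, ← hC]; module
  · right; right
    rw [h1] at hm; rw [h2] at hn
    have hs' : s = 1/2 := by push_cast at hm; linarith
    have ht' : t = 1/2 := by push_cast at hn; linarith
    rw [hpe, hs', ht', ← hB, ← hC]; module


lemma mem_seg_iff {A B p : Pt} :
    p ∈ segment ℝ A B ↔ ∃ r : ℝ, 0 ≤ r ∧ r ≤ 1 ∧ p = A + r • (B - A) := by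
  rw [segment_eq_image']
  constructor
  · rintro ⟨r, hr, rfl⟩; exact ⟨r, hr.1, hr.2, rfl⟩
  · rintro ⟨r, h0, h1, rfl⟩; exact ⟨r, ⟨h0, h1⟩, rfl⟩

lemma bezout_of_unimodular {p q c : ℤ × ℤ} (h : |intDet p q c| = 1) :
    ∃ x y : ℤ, x * (q.1 - p.1) + y * (q.2 - p.2) = 1 := by
  have h1 : intDet p q c = 1 ∨ intDet p q c = -1 :=
    (abs_eq (by norm_num : (0:ℤ) ≤ 1)).mp h
  unfold intDet at h1
  rcases h1 with h1 | h1
  · exact ⟨c.2 - p.2, -(c.1 - p.1), by linarith⟩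
  · exact ⟨-(c.2 - p.2), c.1 - p.1, by linarith⟩

/-- A half-integer non-integer point on a primitive lattice segment is its midpoint. -/
lemma half_on_seg {p q c : ℤ × ℤ} (h : |intDet p q c| = 1) {z : Pt}
    (hz : z ∈ segment ℝ (toPt p) (toPt q)) (hhalf : z ∈ halfPts) (hint : z ∉ intPts) :
    z = midPt p q := by
  obtain ⟨r, h0, h1, rfl⟩ := mem_seg_iff.mp hz
  obtain ⟨w, hw⟩ := halfPts_two_smul hhalf p
  have hw1 : (w.1 : ℝ) = 2 * r * ((q.1 : ℝ) - p.1) := by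
    have h' := congrArg Prod.fst hw
    simp only [toPt, Prod.smul_fst, Prod.fst_sub, Prod.fst_add, smul_eq_mul] at h'
    linear_combination -h'
  have hw2 : (w.2 : ℝ) = 2 * r * ((q.2 : ℝ) - p.2) := by
    have h' := congrArg Prod.snd hw
    simp only [toPt, Prod.smul_snd, Prod.snd_sub, Prod.snd_add, smul_eq_mul] at h'
    linear_combination -h'
  obtain ⟨x, y, hxy⟩ := bezout_of_unimodular h
  have hK : ((x * w.1 + y * w.2 : ℤ) : ℝ) = 2 * r := by
    have hb : ((x * (q.1 - p.1) + y * (q.2 - p.2) : ℤ) : ℝ) = 1 := by rw [hxy]; norm_num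
    push_cast at hb ⊢
    linear_combination x * hw1 + y * hw2 + 2 * r * hb
  set K : ℤ := x * w.1 + y * w.2 with hKdef
  have hK0 : 0 ≤ K := by have : (0:ℝ) ≤ (K:ℝ) := by rw [hK]; linarith
                         exact_mod_cast this
  have hK2 : K ≤ 2 := by have : (K:ℝ) ≤ 2 := by rw [hK]; linarith
                         exact_mod_cast this
  have hK1 : K = 1 := by
    rcases (by omega : K = 0 ∨ K = 1 ∨ K = 2) with h' | h' | h'
    · exfalso
      apply hint
      have hr : r = 0 := by rw [h'] at hK; push_cast at hK; linarith
      rw [hr]; simp only [zero_smul, add_zero]; exact ⟨p, rfl⟩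
    · exact h'
    · exfalso
      apply hint
      have hr : r = 1 := by rw [h'] at hK; push_cast at hK; linarith
      rw [hr]
      refine ⟨q, ?_⟩
      module
  have hr : r = 1/2 := by rw [hK1] at hK; push_cast at hK; linarith
  rw [hr]
  unfold midPt
  module

/-- There is no lattice point in the open part of a primitive lattice segment. -/
lemma no_lattice_open_seg {p q c : ℤ × ℤ} (h : |intDet p q c| = 1) {r : ℝ}
    (h0 : 0 < r) (h1 : r < 1) (hz : toPt p + r • (toPt q - toPt p) ∈ intPts) : False := by
  obtain ⟨v, hv⟩ := hz
  have hv1 : ((v.1 : ℝ)) = (p.1 : ℝ) + r * ((q.1:ℝ) - p.1) := by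
    have := congrArg Prod.fst hv
    simp only [toPt, Prod.fst_add, Prod.smul_fst, Prod.fst_sub, smul_eq_mul] at this
    linarith [this]
  have hv2 : ((v.2 : ℝ)) = (p.2 : ℝ) + r * ((q.2:ℝ) - p.2) := by
    have := congrArg Prod.snd hv
    simp only [toPt, Prod.snd_add, Prod.smul_snd, Prod.snd_sub, smul_eq_mul] at this
    linarith [this]
  obtain ⟨x, y, hxy⟩ := bezout_of_unimodular h
  have hK : ((x * (v.1 - p.1) + y * (v.2 - p.2) : ℤ) : ℝ) = r := by
    have hb : ((x * (q.1 - p.1) + y * (q.2 - p.2) : ℤ) : ℝ) = 1 := by rw [hxy]; norm_num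
    push_cast at hb ⊢
    linear_combination x * hv1 + y * hv2 + r * hb
  set K : ℤ := x * (v.1 - p.1) + y * (v.2 - p.2) with hKdef
  have hK0 : 0 < K := by have : (0:ℝ) < (K:ℝ) := by rw [hK]; linarith
                         exact_mod_cast this
  have hK2 : K < 1 := by have : (K:ℝ) < 1 := by rw [hK]; linarith
                         exact_mod_cast this
  omega

lemma hull_pair (u v : ℤ × ℤ) : hull {u, v} = segment ℝ (toPt u) (toPt v) := by
  unfold hull
  rw [show ((({u, v} : Finset (ℤ×ℤ)) : Set (ℤ×ℤ))) = {u, v} by simp,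
    Set.image_insert_eq, Set.image_singleton, convexHull_pair]

lemma hull_triple (u v c : ℤ × ℤ) :
    hull {u, v, c} = convexHull ℝ ({toPt u, toPt v, toPt c} : Set Pt) := by
  unfold hull
  rw [show ((({u, v, c} : Finset (ℤ×ℤ)) : Set (ℤ×ℤ))) = {u, v, c} by simp]
  rw [Set.image_insert_eq, Set.image_insert_eq, Set.image_singleton]

lemma hull_mono {s t : Finset (ℤ × ℤ)} (h : s ⊆ t) : hull s ⊆ hull t :=
  convexHull_mono (Set.image_mono (by exact_mod_cast h))

lemma hull_singleton (u : ℤ × ℤ) : hull {u} = {toPt u} := by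
  unfold hull; simp

lemma hull_empty : hull ∅ = ∅ := by unfold hull; simp

/-- The midpoint of an edge is not a lattice point. -/
lemma midPt_not_int {u v c : ℤ × ℤ} (h : |intDet u v c| = 1) : midPt u v ∉ intPts := by
  rintro ⟨w, hw⟩
  have h1 : (w.1 : ℝ) = ((u.1 : ℝ) + v.1) / 2 := by
    have := congrArg Prod.fst hw
    simp only [toPt, midPt, Prod.smul_fst, Prod.fst_add, smul_eq_mul] at this
    linarith [this]
  have h2 : (w.2 : ℝ) = ((u.2 : ℝ) + v.2) / 2 := by
    have := congrArg Prod.snd hw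
    simp only [toPt, midPt, Prod.smul_snd, Prod.snd_add, smul_eq_mul] at this
    linarith [this]
  have e1 : 2 * w.1 = u.1 + v.1 := by
    have : (2 * w.1 : ℝ) = ((u.1 + v.1 : ℤ) : ℝ) := by rw [h1]; push_cast; ring
    exact_mod_cast this
  have e2 : 2 * w.2 = u.2 + v.2 := by
    have : (2 * w.2 : ℝ) = ((u.2 + v.2 : ℤ) : ℝ) := by rw [h2]; push_cast; ring
    exact_mod_cast this
  have : intDet u v c = 2 * ((w.1 - u.1) * (c.2 - u.2) - (c.1 - u.1) * (w.2 - u.2)) := by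
    unfold intDet; linear_combination (-(c.2 - u.2)) * e1 + (c.1 - u.1) * e2
  rcases (abs_eq (by norm_num : (0:ℤ) ≤ 1)).mp h with h' | h' <;> omega

/-- Two edges of a triangle with the same vertex sum coincide. -/
lemma edge_unique_in_tri {T : Finset (ℤ × ℤ)} (hT : T.card = 3) {u v p q : ℤ × ℤ}
    (hu : u ∈ T) (hv : v ∈ T) (hp : p ∈ T) (hq : q ∈ T)
    (huv : u ≠ v) (hpq : p ≠ q) (hsum : u + v = p + q) :
    ({u, v} : Finset (ℤ × ℤ)) = {p, q} := by
  by_cases hup : u = p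
  · subst hup
    have hvq : v = q := add_left_cancel hsum
    rw [hvq]
  · by_cases huq : u = q
    · subst huq
      have hvp : v = p := by
        have h' : v + u = p + u := by rw [add_comm v u, hsum, add_comm]
        exact add_right_cancel h'
      rw [hvp, Finset.pair_comm]
    · exfalso
      have hsub : ({u, p, q} : Finset (ℤ × ℤ)) ⊆ T := by
        simp only [Finset.insert_subset_iff, Finset.singleton_subset_iff]
        exact ⟨hu, hp, hq⟩
      have hcard : ({u, p, q} : Finset (ℤ × ℤ)).card = 3 := by
        rw [Finset.card_insert_of_notMem (by simp [hup, huq]),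
          Finset.card_insert_of_notMem (by simp [hpq]), Finset.card_singleton]
      have hTeq : ({u, p, q} : Finset (ℤ × ℤ)) = T :=
        Finset.eq_of_subset_of_card_le hsub (by rw [hT, hcard])
      have hvmem : v ∈ ({u, p, q} : Finset (ℤ × ℤ)) := hTeq ▸ hv
      simp only [Finset.mem_insert, Finset.mem_singleton] at hvmem
      rcases hvmem with h | h | h
      · exact huv h.symm
      · apply huq
        have h2 : v + u = v + q := by rw [add_comm v u, hsum, h]
        exact add_left_cancel h2
      · apply hup
        have h2 : u + v = p + v := by rw [hsum, h]
        exact add_right_cancel h2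

section Tri
variable {R : Set Pt} (𝒯 : UnimodularTriangulation R)

lemma hull_subset_R {T : Finset (ℤ × ℤ)} (hT : T ∈ 𝒯.tris) : hull T ⊆ R := by
  rw [← 𝒯.cover]
  exact Set.subset_biUnion_of_mem hT

omit 𝒯 in
lemma R_closed (𝒯 : UnimodularTriangulation R) : IsClosed R := by
  rw [← 𝒯.cover]
  apply Set.Finite.isClosed_biUnion 𝒯.tris.finite_toSet
  intro T _
  exact ((T.finite_toSet.image toPt).isCompact_convexHull ℝ).isClosed

lemma unimod_tri {T : Finset (ℤ × ℤ)} (hT : T ∈ 𝒯.tris) {u v c : ℤ × ℤ}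
    (hu : u ∈ T) (hv : v ∈ T) (hc : c ∈ T)
    (h1 : u ≠ v) (h2 : u ≠ c) (h3 : v ≠ c) : |intDet u v c| = 1 :=
  𝒯.unimodular T hT u hu v hv c hc h1 h2 h3

lemma edge_struct {e : Finset (ℤ × ℤ)} (he : e ∈ 𝒯.edges) :
    ∃ T ∈ 𝒯.tris, ∃ u v c : ℤ × ℤ,
      e = {u, v} ∧ T = {u, v, c} ∧ u ≠ v ∧ u ≠ c ∧ v ≠ c := by
  rw [UnimodularTriangulation.edges, Finset.mem_biUnion] at he
  obtain ⟨T, hT, he⟩ := he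
  rw [Finset.mem_powersetCard] at he
  obtain ⟨hsub, hcard⟩ := he
  obtain ⟨u, v, huv, rfl⟩ := Finset.card_eq_two.mp hcard
  have hTcard := 𝒯.card3 T hT
  have hsd : (T \ {u, v}).card = 1 := by
    rw [Finset.card_sdiff_of_subset hsub, hTcard, hcard]
  obtain ⟨c, hc⟩ := Finset.card_eq_one.mp hsd
  have hcmem : c ∈ T \ ({u, v} : Finset (ℤ × ℤ)) := by
    rw [hc]; exact Finset.mem_singleton_self c
  rw [Finset.mem_sdiff] at hcmem
  have hcuv : c ∉ ({u, v} : Finset (ℤ × ℤ)) := hcmem.2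
  refine ⟨T, hT, u, v, c, rfl, ?_, huv, ?_, ?_⟩
  · have hun := Finset.union_sdiff_of_subset hsub
    rw [hc] at hun
    rw [← hun]
    ext x
    simp only [Finset.mem_union, Finset.mem_insert, Finset.mem_singleton]
    tauto
  · intro h; exact hcuv (by rw [← h]; simp)
  · intro h; exact hcuv (by rw [← h]; simp)

lemma edgeMid_pair {u v : ℤ × ℤ} (h : u ≠ v) : edgeMid {u, v} = midPt u v := by
  unfold edgeMid midPt
  rw [Finset.sum_pair h]

lemma midPt_mem_seg (u v : ℤ × ℤ) : midPt u v ∈ segment ℝ (toPt u) (toPt v) := by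
  rw [mem_seg_iff]
  exact ⟨1/2, by norm_num, by norm_num, by unfold midPt; module⟩

lemma midPt_half (u v : ℤ × ℤ) : midPt u v ∈ halfPts := by
  constructor
  · refine ⟨u.1 + v.1, ?_⟩
    simp only [midPt, toPt, Prod.smul_fst, Prod.fst_add, smul_eq_mul]
    push_cast; ring
  · refine ⟨u.2 + v.2, ?_⟩
    simp only [midPt, toPt, Prod.smul_snd, Prod.snd_add, smul_eq_mul]
    push_cast; ring

/-- A half-integer non-integer point in the hull of a face of a triangle is the
midpoint of two vertices of the face. -/
lemma half_mem_hull_face {T F : Finset (ℤ × ℤ)} (hT : T ∈ 𝒯.tris) (hF : F ⊆ T)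
    {m : Pt} (hm : m ∈ hull F) (hhalf : m ∈ halfPts) (hint : m ∉ intPts) :
    ∃ p q, p ∈ F ∧ q ∈ F ∧ p ≠ q ∧ m = midPt p q := by
  have hTcard := 𝒯.card3 T hT
  have hFle : F.card ≤ 3 := hTcard ▸ Finset.card_le_card hF
  interval_cases hFc : F.card
  · rw [Finset.card_eq_zero.mp hFc, hull_empty] at hm
    exact absurd hm (Set.notMem_empty m)
  · obtain ⟨p, hp⟩ := Finset.card_eq_one.mp hFc
    rw [hp, hull_singleton] at hm
    exact absurd (hm ▸ ⟨p, rfl⟩ : m ∈ intPts) hint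
  · obtain ⟨p, q, hpq, hFpq⟩ := Finset.card_eq_two.mp hFc
    -- third vertex of T
    have hsd : (T \ F).card = 1 := by rw [Finset.card_sdiff_of_subset hF, hTcard, hFc]
    obtain ⟨w, hw⟩ := Finset.card_eq_one.mp hsd
    have hwmem : w ∈ T \ F := by rw [hw]; exact Finset.mem_singleton_self w
    rw [Finset.mem_sdiff] at hwmem
    have hpT : p ∈ T := hF (by rw [hFpq]; simp)
    have hqT : q ∈ T := hF (by rw [hFpq]; simp)
    have hpw : p ≠ w := fun h => hwmem.2 (h ▸ (by rw [hFpq]; simp))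
    have hqw : q ≠ w := fun h => hwmem.2 (h ▸ (by rw [hFpq]; simp))
    have hdet := unimod_tri 𝒯 hT hpT hqT hwmem.1 hpq hpw hqw
    rw [hFpq, hull_pair] at hm
    exact ⟨p, q, by rw [hFpq]; simp, by rw [hFpq]; simp, hpq,
      half_on_seg hdet hm hhalf hint⟩
  · have hFT : F = T := Finset.eq_of_subset_of_card_le hF (by rw [hTcard, hFc])
    obtain ⟨a, b, c, hab, hac, hbc, hTabc⟩ := Finset.card_eq_three.mp hTcard
    have hm' : m ∈ convexHull ℝ ({toPt a, toPt b, toPt c} : Set Pt) := by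
      rw [hFT, hTabc, hull_triple] at hm; exact hm
    have haT : a ∈ T := by rw [hTabc]; simp
    have hbT : b ∈ T := by rw [hTabc]; simp
    have hcT : c ∈ T := by rw [hTabc]; simp
    have hdet := unimod_tri 𝒯 hT haT hbT hcT hab hac hbc
    rcases half_in_hull hdet hm' hhalf hint with h | h | h
    · exact ⟨a, b, by rw [hFT, hTabc]; simp, by rw [hFT, hTabc]; simp, hab, h⟩
    · exact ⟨a, c, by rw [hFT, hTabc]; simp, by rw [hFT, hTabc]; simp, hac, h⟩
    · exact ⟨b, c, by rw [hFT, hTabc]; simp, by rw [hFT, hTabc]; simp, hbc, h⟩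

end Tri

lemma halfplane_of_hull {A B C : Pt} {w : Pt} (hw : w ∈ convexHull ℝ ({A, B, C} : Set Pt)) :
    0 ≤ detP (B - A) (C - A) * detP (B - A) (w - A) := by
  obtain ⟨s, t, hs, ht, hst, rfl⟩ := mem_hull3.1 hw
  have h1 : (A + s • (B - A) + t • (C - A)) - A = s • (B - A) + t • (C - A) := by abel
  rw [h1, detP_comb_right]
  nlinarith [mul_nonneg ht (mul_self_nonneg (detP (B - A) (C - A)))]

lemma detP_continuous (U E : Pt) (d : ℝ) :
    Continuous fun w : Pt => detP (w - U) E / d := by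
  unfold detP
  fun_prop

lemma detP_continuous' (U E : Pt) (d : ℝ) :
    Continuous fun w : Pt => detP E (w - U) / d := by
  unfold detP
  fun_prop

/-- If two nondegenerate triangles share the edge `AB` and lie on opposite sides of it,
then the midpoint of `AB` lies in the interior of their union. -/
lemma mid_interior_two_tris {A B C C' : Pt}
    (hD : detP (B - A) (C - A) ≠ 0) (hD' : detP (B - A) (C' - A) ≠ 0)
    (hopp : detP (B - A) (C - A) * detP (B - A) (C' - A) < 0) :
    A + (2⁻¹ : ℝ) • (B - A) ∈
      interior (convexHull ℝ ({A, B, C} : Set Pt) ∪ convexHull ℝ ({A, B, C'} : Set Pt)) := by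
  set E1 := B - A with hE1
  set E2 := C - A with hE2
  set E2' := C' - A with hE2'
  set D := detP E1 E2 with hDdef
  set D' := detP E1 E2' with hD'def
  set N : Set Pt :=
    ((fun w : Pt => detP (w - A) E2 / D) ⁻¹' Set.Ioo (1/4) (3/4)) ∩
    ((fun w : Pt => detP E1 (w - A) / D) ⁻¹' Set.Ioo (-(1/4)) (1/4)) ∩
    ((fun w : Pt => detP (w - A) E2' / D') ⁻¹' Set.Ioo (1/4) (3/4)) ∩
    ((fun w : Pt => detP E1 (w - A) / D') ⁻¹' Set.Ioo (-(1/4)) (1/4)) with hN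
  have hNopen : IsOpen N := by
    rw [hN]
    exact ((((detP_continuous A E2 D).isOpen_preimage _ isOpen_Ioo).inter
      ((detP_continuous' A E1 D).isOpen_preimage _ isOpen_Ioo)).inter
      ((detP_continuous A E2' D').isOpen_preimage _ isOpen_Ioo)).inter
      ((detP_continuous' A E1 D').isOpen_preimage _ isOpen_Ioo)
  have hmA : (A + (2⁻¹ : ℝ) • E1) - A = (2⁻¹ : ℝ) • E1 + (0:ℝ) • E2 := by module
  have hmA' : (A + (2⁻¹ : ℝ) • E1) - A = (2⁻¹ : ℝ) • E1 + (0:ℝ) • E2' := by module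
  have c1 : detP ((A + (2⁻¹:ℝ) • E1) - A) E2 = 2⁻¹ * D := by rw [hmA, detP_comb_left]
  have c2 : detP E1 ((A + (2⁻¹:ℝ) • E1) - A) = 0 * D := by rw [hmA, detP_comb_right]
  have c3 : detP ((A + (2⁻¹:ℝ) • E1) - A) E2' = 2⁻¹ * D' := by rw [hmA', detP_comb_left]
  have hmN : A + (2⁻¹ : ℝ) • E1 ∈ N := by
    simp only [hN, Set.mem_inter_iff, Set.mem_preimage, Set.mem_Ioo]
    simp only [c1, c2, c3, zero_mul, zero_div, mul_div_assoc, div_self hD, div_self hD',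
      mul_one]
    norm_num
  have hNsub : N ⊆ convexHull ℝ ({A, B, C} : Set Pt) ∪ convexHull ℝ ({A, B, C'} : Set Pt) := by
    intro w hw
    simp only [hN, Set.mem_inter_iff, Set.mem_preimage, Set.mem_Ioo] at hw
    obtain ⟨⟨⟨⟨hs1, hs2⟩, ht1, ht2⟩, hs1', hs2'⟩, ht1', ht2'⟩ := hw
    have hcr := cramer E1 E2 (w - A) hD
    have hcr' := cramer E1 E2' (w - A) hD'
    rw [← hDdef] at hcr
    rw [← hD'def] at hcr'
    rcases le_or_gt 0 (detP E1 (w - A) / D) with h | h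
    · left
      rw [mem_hull3]
      refine ⟨detP (w - A) E2 / D, detP E1 (w - A) / D, by linarith, h, by linarith, ?_⟩
      rw [← hE1, ← hE2]
      calc w = A + (w - A) := by abel
        _ = A + ((detP (w - A) E2 / D) • E1 + (detP E1 (w - A) / D) • E2) := by rw [← hcr]
        _ = A + (detP (w - A) E2 / D) • E1 + (detP E1 (w - A) / D) • E2 := by module
    · right
      rw [mem_hull3]
      have h5 : (detP E1 (w - A) / D') * D' = (detP E1 (w - A) / D) * D := by
        field_simp
      have htfpos : 0 < detP E1 (w - A) / D' := by
        rcases lt_or_gt_of_ne hD' with hneg | hpos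
        · have hDpos : 0 < D := by nlinarith
          nlinarith
        · have hDneg : D < 0 := by nlinarith
          nlinarith
      refine ⟨detP (w - A) E2' / D', detP E1 (w - A) / D', by linarith, le_of_lt htfpos,
        by linarith, ?_⟩
      rw [← hE1, ← hE2']
      calc w = A + (w - A) := by abel
        _ = A + ((detP (w - A) E2' / D') • E1 + (detP E1 (w - A) / D') • E2') := by rw [← hcr']
        _ = A + (detP (w - A) E2' / D') • E1 + (detP E1 (w - A) / D') • E2' := by module
  exact mem_interior.mpr ⟨N, hNsub, hNopen, hmN⟩

lemma edgeSeg_eq_hull (e : Finset (ℤ × ℤ)) : edgeSeg e = hull e := rfl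

lemma hull_closed (T : Finset (ℤ × ℤ)) : IsClosed (hull T) :=
  ((T.finite_toSet.image toPt).isCompact_convexHull ℝ).isClosed

set_option maxHeartbeats 2000000 in
/-- The midpoint of an inner edge lies in the interior of the region. -/
lemma mid_mem_interior {R : Set Pt} (𝒯 : UnimodularTriangulation R)
    {e : Finset (ℤ × ℤ)} (he : e ∈ 𝒯.innerEdges) : edgeMid e ∈ interior R := by
  classical
  rw [UnimodularTriangulation.innerEdges, Finset.mem_filter] at he
  obtain ⟨heE, hnotbd⟩ := he
  obtain ⟨T, hT, u, v, c, rfl, hTeq, huv, huc, hvc⟩ := edge_struct 𝒯 heE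
  have hsub_uvT : ({u, v} : Finset (ℤ × ℤ)) ⊆ T := by
    rw [hTeq]; intro y hy
    simp only [Finset.mem_insert, Finset.mem_singleton] at hy ⊢
    tauto
  have huT : u ∈ T := hsub_uvT (by simp)
  have hvT : v ∈ T := hsub_uvT (by simp)
  have hcT : c ∈ T := by rw [hTeq]; simp
  have hdetI : |intDet u v c| = 1 := unimod_tri 𝒯 hT huT hvT hcT huv huc hvc
  set D := detP (toPt v - toPt u) (toPt c - toPt u) with hD
  have hDeq : D = (intDet u v c : ℝ) := detP_toPt u v c
  have hD0 : D ≠ 0 := by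
    rw [hDeq]
    rcases (abs_eq (by norm_num : (0:ℤ) ≤ 1)).mp hdetI with h | h <;> rw [h] <;> norm_num
  have hclosed : IsClosed R := R_closed 𝒯
  have hfront : frontier R = R \ interior R := hclosed.frontier_eq
  obtain ⟨x, hxseg, hxfr⟩ := Set.not_subset.mp hnotbd
  have hxR : x ∈ R := hull_subset_R 𝒯 hT (hull_mono hsub_uvT hxseg)
  have hxint : x ∈ interior R := by
    by_contra hxi
    exact hxfr (by rw [hfront]; exact ⟨hxR, hxi⟩)
  rw [edgeSeg_eq_hull, hull_pair, mem_seg_iff] at hxseg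
  obtain ⟨s₀, hs₀0, hs₀1, rfl⟩ := hxseg
  obtain ⟨ε, hε, hball⟩ := Metric.isOpen_iff.mp isOpen_interior _ hxint
  have hE1ne : toPt v - toPt u ≠ 0 := by
    rw [sub_ne_zero]
    exact fun h => huv (toPt_injective h.symm)
  have hE1norm : 0 < ‖toPt v - toPt u‖ := norm_pos_iff.mpr hE1ne
  set δ := min (1/2) (ε / (2 * ‖toPt v - toPt u‖)) with hδ
  have hδpos : 0 < δ := lt_min (by norm_num) (by positivity)
  have hδhalf : δ ≤ 1/2 := min_le_left _ _
  have hδε : δ * ‖toPt v - toPt u‖ < ε := by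
    have h1 : δ ≤ ε / (2 * ‖toPt v - toPt u‖) := min_le_right _ _
    calc δ * ‖toPt v - toPt u‖ ≤ (ε / (2 * ‖toPt v - toPt u‖)) * ‖toPt v - toPt u‖ := by
          nlinarith
      _ = ε / 2 := by field_simp
      _ < ε := by linarith
  set s₁ := min (max s₀ δ) (1 - δ) with hs₁
  have hs₁pos : 0 < s₁ := lt_min (lt_of_lt_of_le hδpos (le_max_right _ _)) (by linarith)
  have hs₁lt : s₁ < 1 := lt_of_le_of_lt (min_le_right _ _) (by linarith)
  have hs₁near : |s₁ - s₀| ≤ δ := by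
    rw [abs_le]
    constructor
    · have h1 : s₀ - δ ≤ max s₀ δ := le_trans (by linarith) (le_max_left _ _)
      have h2 : s₀ - δ ≤ 1 - δ := by linarith
      have h3 := le_min h1 h2
      linarith
    · have h1 : s₁ ≤ max s₀ δ := min_le_left _ _
      have h2 : max s₀ δ ≤ s₀ + δ := max_le (by linarith) (by linarith)
      linarith
  set z := toPt u + s₁ • (toPt v - toPt u) with hz
  have hzball : z ∈ Metric.ball (toPt u + s₀ • (toPt v - toPt u)) ε := by
    rw [Metric.mem_ball, dist_eq_norm]
    have hdiff : z - (toPt u + s₀ • (toPt v - toPt u)) = (s₁ - s₀) • (toPt v - toPt u) := by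
      rw [hz]; module
    rw [hdiff, norm_smul, Real.norm_eq_abs]
    calc |s₁ - s₀| * ‖toPt v - toPt u‖ ≤ δ * ‖toPt v - toPt u‖ := by nlinarith [abs_nonneg (s₁ - s₀)]
      _ < ε := hδε
  have hzint : z ∈ interior R := hball hzball
  have hznotint : z ∉ intPts := fun hzi => no_lattice_open_seg hdetI hs₁pos hs₁lt hzi
  -- normal direction
  set n : Pt := (-D) • (-(toPt v - toPt u).2, (toPt v - toPt u).1) with hn
  have hnsq : 0 < (toPt v - toPt u).1 * (toPt v - toPt u).1
      + (toPt v - toPt u).2 * (toPt v - toPt u).2 := by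
    have hne : ¬((toPt v - toPt u).1 = 0 ∧ (toPt v - toPt u).2 = 0) := by
      intro hcon
      exact hE1ne (Prod.ext_iff.mpr (by simpa using hcon))
    rcases not_and_or.mp hne with h | h
    · nlinarith [mul_self_pos.mpr h, mul_self_nonneg (toPt v - toPt u).2]
    · nlinarith [mul_self_pos.mpr h, mul_self_nonneg (toPt v - toPt u).1]
  have hdetn : detP (toPt v - toPt u) n = (-D) * ((toPt v - toPt u).1 * (toPt v - toPt u).1
      + (toPt v - toPt u).2 * (toPt v - toPt u).2) := by
    rw [hn]
    unfold detP
    simp only [Prod.smul_fst, Prod.smul_snd, smul_eq_mul]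
    ring
  have hdetn0 : detP (toPt v - toPt u) n ≠ 0 := by
    rw [hdetn]
    exact mul_ne_zero (neg_ne_zero.mpr hD0) (ne_of_gt hnsq)
  have hnne : n ≠ 0 := by
    intro h
    apply hdetn0
    rw [h]
    unfold detP
    simp
  have hnnorm : 0 < ‖n‖ := norm_pos_iff.mpr hnne
  obtain ⟨ε₂, hε₂, hball₂⟩ := Metric.isOpen_iff.mp isOpen_interior _ hzint
  set ε₀ := ε₂ / ‖n‖ with hε₀
  have hε₀pos : 0 < ε₀ := div_pos hε₂ hnnorm
  set W : Set Pt := (fun t : ℝ => z + t • n) '' (Set.Ioo 0 ε₀) with hW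
  have hWR : W ⊆ R := by
    rintro w ⟨t, ⟨ht0, ht1⟩, rfl⟩
    apply interior_subset
    apply hball₂
    rw [Metric.mem_ball, dist_eq_norm]
    have hdd : z + t • n - z = t • n := by abel
    rw [hdd, norm_smul, Real.norm_eq_abs, abs_of_pos ht0]
    calc t * ‖n‖ < ε₀ * ‖n‖ := by nlinarith
      _ = ε₂ := by rw [hε₀]; field_simp
  have hzclW : z ∈ closure W := by
    rw [Metric.mem_closure_iff]
    intro ρ hρ
    set τ := min (ε₀ / 2) (ρ / (2 * ‖n‖)) with hτ
    have hτpos : 0 < τ := lt_min (by linarith) (by positivity)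
    refine ⟨z + τ • n, ⟨τ, ⟨hτpos, lt_of_le_of_lt (min_le_left _ _) (by linarith)⟩, rfl⟩, ?_⟩
    rw [dist_eq_norm]
    have hdd : z - (z + τ • n) = (-τ) • n := by module
    rw [hdd, norm_smul, Real.norm_eq_abs, abs_neg, abs_of_pos hτpos]
    calc τ * ‖n‖ ≤ (ρ / (2 * ‖n‖)) * ‖n‖ := by nlinarith [min_le_right (ε₀ / 2) (ρ / (2 * ‖n‖))]
      _ = ρ / 2 := by field_simp
      _ < ρ := by linarith
  have hWcov : W = ⋃ T' ∈ 𝒯.tris, (hull T' ∩ W) := by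
    ext w
    constructor
    · intro hw
      have hwR : w ∈ R := hWR hw
      rw [← 𝒯.cover] at hwR
      simp only [Set.mem_iUnion] at hwR ⊢
      obtain ⟨T', hT', hwT'⟩ := hwR
      exact ⟨T', hT', hwT', hw⟩
    · intro hw
      simp only [Set.mem_iUnion] at hw
      obtain ⟨T', _, _, hw⟩ := hw
      exact hw
  rw [hWcov, Finset.closure_biUnion 𝒯.tris] at hzclW
  simp only [Set.mem_iUnion] at hzclW
  obtain ⟨T', hT', hzcl⟩ := hzclW
  have hzT' : z ∈ hull T' :=
    (hull_closed T').closure_eq ▸ closure_mono Set.inter_subset_left hzcl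
  obtain ⟨w₀, hw₀T', hw₀W⟩ : (hull T' ∩ W).Nonempty := closure_nonempty_iff.mp ⟨z, hzcl⟩
  obtain ⟨t₀, ⟨ht₀0, ht₀1⟩, hw₀eq⟩ := hw₀W
  have hside : detP (toPt v - toPt u) (w₀ - toPt u) * D < 0 := by
    have hdd : w₀ - toPt u = s₁ • (toPt v - toPt u) + t₀ • n := by
      rw [← hw₀eq, hz]; module
    rw [hdd, detP_comb_right, hdetn]
    nlinarith [mul_pos (mul_pos ht₀0 hnsq) (mul_self_pos.mpr hD0)]
  have hzT : z ∈ hull T := by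
    apply hull_mono hsub_uvT
    rw [hull_pair, mem_seg_iff]
    exact ⟨s₁, le_of_lt hs₁pos, le_of_lt hs₁lt, rfl⟩
  have hzF : z ∈ hull (T ∩ T') := by
    rw [← 𝒯.glue T hT T' hT']
    exact ⟨hzT, hzT'⟩
  have hzU : z - toPt u = s₁ • (toPt v - toPt u) + (0:ℝ) • (toPt c - toPt u) := by
    rw [hz]; module
  have hFT : T ∩ T' ⊆ T := Finset.inter_subset_left
  have hFcard : (T ∩ T').card ≤ 3 := (𝒯.card3 T hT) ▸ Finset.card_le_card hFT
  -- the common face is exactly the edge {u, v}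
  have hFuv : T ∩ T' = ({u, v} : Finset (ℤ × ℤ)) := by
    have hc0 : (T ∩ T').card ≠ 0 := by
      intro h0
      rw [Finset.card_eq_zero.mp h0, hull_empty] at hzF
      exact hzF
    have hc1 : (T ∩ T').card ≠ 1 := by
      intro h1
      obtain ⟨p, hp⟩ := Finset.card_eq_one.mp h1
      rw [hp, hull_singleton] at hzF
      exact hznotint (hzF ▸ ⟨p, rfl⟩)
    have hc3 : (T ∩ T').card ≠ 3 := by
      intro h3
      have hFTeq : T ∩ T' = T := Finset.eq_of_subset_of_card_le hFT (by rw [𝒯.card3 T hT, h3])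
      have hTT' : T = T' := by
        apply Finset.eq_of_subset_of_card_le
        · intro y hy
          have : y ∈ T ∩ T' := hFTeq.symm ▸ hy
          exact (Finset.mem_inter.mp this).2
        · rw [𝒯.card3 T hT, 𝒯.card3 T' hT']
      have hw₀T : w₀ ∈ convexHull ℝ ({toPt u, toPt v, toPt c} : Set Pt) := by
        rw [← hull_triple, ← hTeq, hTT']
        exact hw₀T'
      have := halfplane_of_hull hw₀T
      rw [← hD] at this
      nlinarith [hside]
    have hc2 : (T ∩ T').card = 2 := by omega
    obtain ⟨p, q, hpq, hFpq⟩ := Finset.card_eq_two.mp hc2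
    have hpT : p ∈ T := hFT (by rw [hFpq]; simp)
    have hqT : q ∈ T := hFT (by rw [hFpq]; simp)
    rw [hTeq] at hpT hqT
    simp only [Finset.mem_insert, Finset.mem_singleton] at hpT hqT
    rw [hFpq, hull_pair, mem_seg_iff] at hzF
    obtain ⟨r, hr0, hr1, hzPQ⟩ := hzF
    rw [hFpq]
    -- rule out the cases where c occurs
    rcases hpT with hp | hp | hp <;> rcases hqT with hq | hq | hq
    · exact absurd (hp.trans hq.symm) hpq
    · rw [hp, hq]
    · exfalso
      rw [hp, hq] at hzPQ
      have h2 : z - toPt u = (0:ℝ) • (toPt v - toPt u) + r • (toPt c - toPt u) := by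
        rw [hzPQ]; module
      have hcu := coords_unique hD0 (h2.symm.trans hzU)
      linarith [hcu.1.symm, hs₁pos]
    · rw [hp, hq, Finset.pair_comm]
    · exact absurd (hp.trans hq.symm) hpq
    · exfalso
      rw [hp, hq] at hzPQ
      have h2 : z - toPt u = (1 - r) • (toPt v - toPt u) + r • (toPt c - toPt u) := by
        rw [hzPQ]; module
      have hcu := coords_unique hD0 (h2.symm.trans hzU)
      have hr0' : r = 0 := by linarith [hcu.2]
      have hs11 : s₁ = 1 := by
        have := hcu.1
        rw [hr0'] at this
        linarith
      linarith
    · exfalso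
      rw [hp, hq] at hzPQ
      have h2 : z - toPt u = (0:ℝ) • (toPt v - toPt u) + (1 - r) • (toPt c - toPt u) := by
        rw [hzPQ]; module
      have hcu := coords_unique hD0 (h2.symm.trans hzU)
      linarith [hcu.1.symm, hs₁pos]
    · exfalso
      rw [hp, hq] at hzPQ
      have h2 : z - toPt u = r • (toPt v - toPt u) + (1 - r) • (toPt c - toPt u) := by
        rw [hzPQ]; module
      have hcu := coords_unique hD0 (h2.symm.trans hzU)
      have hr1' : r = 1 := by linarith [hcu.2]
      have hs11 : s₁ = 1 := by
        have := hcu.1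
        rw [hr1'] at this
        linarith
      linarith
    · exact absurd (hp.trans hq.symm) hpq
  -- third vertex of T'
  have huvT' : ({u, v} : Finset (ℤ × ℤ)) ⊆ T' := by
    rw [← hFuv]
    exact Finset.inter_subset_right
  have hT'card := 𝒯.card3 T' hT'
  have hsd : (T' \ ({u, v} : Finset (ℤ × ℤ))).card = 1 := by
    rw [Finset.card_sdiff_of_subset huvT', hT'card, Finset.card_pair huv]
  obtain ⟨c', hc'⟩ := Finset.card_eq_one.mp hsd
  have hc'mem : c' ∈ T' \ ({u, v} : Finset (ℤ × ℤ)) := by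
    rw [hc']; exact Finset.mem_singleton_self c'
  rw [Finset.mem_sdiff] at hc'mem
  have hc'uv : c' ∉ ({u, v} : Finset (ℤ × ℤ)) := hc'mem.2
  have huc' : u ≠ c' := fun h => hc'uv (by rw [← h]; simp)
  have hvc' : v ≠ c' := fun h => hc'uv (by rw [← h]; simp)
  have hT'eq : T' = ({u, v, c'} : Finset (ℤ × ℤ)) := by
    have hun := Finset.union_sdiff_of_subset huvT'
    rw [hc'] at hun
    rw [← hun]
    ext y
    simp only [Finset.mem_union, Finset.mem_insert, Finset.mem_singleton]
    tauto
  set D' := detP (toPt v - toPt u) (toPt c' - toPt u) with hD'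
  have hdetI' : |intDet u v c'| = 1 := by
    apply unimod_tri 𝒯 hT' (huvT' (by simp)) (huvT' (by simp)) hc'mem.1 huv huc' hvc'
  have hD'eq : D' = (intDet u v c' : ℝ) := detP_toPt u v c'
  have hD'0 : D' ≠ 0 := by
    rw [hD'eq]
    rcases (abs_eq (by norm_num : (0:ℤ) ≤ 1)).mp hdetI' with h | h <;> rw [h] <;> norm_num
  -- opposite side
  have hw₀hp : 0 ≤ D' * detP (toPt v - toPt u) (w₀ - toPt u) := by
    have hw₀T'' : w₀ ∈ convexHull ℝ ({toPt u, toPt v, toPt c'} : Set Pt) := by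
      rw [← hull_triple, ← hT'eq]
      exact hw₀T'
    have := halfplane_of_hull hw₀T''
    rw [← hD'] at this
    exact this
  have hopp : D * D' < 0 := by
    have hX0 : detP (toPt v - toPt u) (w₀ - toPt u) ≠ 0 := by
      intro h
      rw [h, zero_mul] at hside
      exact lt_irrefl 0 hside
    rcases lt_or_gt_of_ne hX0 with hX | hX
    · have hDpos : 0 < D := by nlinarith [hside]
      have hD'neg : D' ≤ 0 := by nlinarith [hw₀hp]
      exact mul_neg_of_pos_of_neg hDpos (lt_of_le_of_ne hD'neg hD'0)
    · have hDneg : D < 0 := by nlinarith [hside]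
      have hD'pos : 0 ≤ D' := by nlinarith [hw₀hp]
      exact mul_neg_of_neg_of_pos hDneg (lt_of_le_of_ne hD'pos (Ne.symm hD'0))
  -- conclude
  have hmid := mid_interior_two_tris (A := toPt u) (B := toPt v) (C := toPt c) (C' := toPt c')
    (by rw [← hD]; exact hD0) (by rw [← hD']; exact hD'0) (by rw [← hD, ← hD']; exact hopp)
  have hmidsub : interior (convexHull ℝ ({toPt u, toPt v, toPt c} : Set Pt)
      ∪ convexHull ℝ ({toPt u, toPt v, toPt c'} : Set Pt)) ⊆ interior R := by
    apply interior_mono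
    apply Set.union_subset
    · rw [← hull_triple, ← hTeq]
      exact hull_subset_R 𝒯 hT
    · rw [← hull_triple, ← hT'eq]
      exact hull_subset_R 𝒯 hT'
  have hmid' : edgeMid {u, v} = toPt u + (2⁻¹ : ℝ) • (toPt v - toPt u) := by
    rw [edgeMid_pair huv]
    unfold midPt
    module
  rw [hmid']
  exact hmidsub hmid

lemma inner_edge_struct {R : Set Pt} (𝒯 : UnimodularTriangulation R)
    {e : Finset (ℤ × ℤ)} (he : e ∈ 𝒯.innerEdges) :
    ∃ T ∈ 𝒯.tris, ∃ u v c : ℤ × ℤ,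
      e = {u, v} ∧ T = {u, v, c} ∧ u ≠ v ∧ u ≠ c ∧ v ≠ c := by
  classical
  rw [UnimodularTriangulation.innerEdges, Finset.mem_filter] at he
  exact edge_struct 𝒯 he.1

lemma mid_mem_hullT {u v : ℤ × ℤ} {T : Finset (ℤ × ℤ)}
    (h : ({u, v} : Finset (ℤ × ℤ)) ⊆ T) : midPt u v ∈ hull T := by
  apply hull_mono h
  rw [hull_pair]
  exact midPt_mem_seg u v

/-- in any unimodular triangulation of a lattice polygon `P`, taking
midpoints is a bijection between the inner edges and the set
`M = ((1/2)ℤ² \ ℤ²) ∩ int P`. -/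
theorem inner_edges_midpoint_bijection (P : LatticePolygon)
    (𝒯 : UnimodularTriangulation P.region) :
    Set.BijOn edgeMid ↑𝒯.innerEdges (Mset P) := by
  classical
  refine ⟨?_, ?_, ?_⟩
  · -- MapsTo
    intro e he
    rw [Finset.mem_coe] at he
    obtain ⟨T, hT, u, v, c, rfl, hTeq, huv, huc, hvc⟩ := inner_edge_struct 𝒯 he
    have huT : u ∈ T := by rw [hTeq]; simp
    have hvT : v ∈ T := by rw [hTeq]; simp
    have hcT : c ∈ T := by rw [hTeq]; simp
    have hdet := unimod_tri 𝒯 hT huT hvT hcT huv huc hvc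
    rw [edgeMid_pair huv]
    refine ⟨⟨midPt_half u v, midPt_not_int hdet⟩, ?_⟩
    have := mid_mem_interior 𝒯 he
    rw [edgeMid_pair huv] at this
    exact this
  · -- InjOn
    intro e₁ h₁ e₂ h₂ heq
    rw [Finset.mem_coe] at h₁ h₂
    obtain ⟨T₁, hT₁, u₁, v₁, c₁, rfl, hTeq₁, huv₁, huc₁, hvc₁⟩ := inner_edge_struct 𝒯 h₁
    obtain ⟨T₂, hT₂, u₂, v₂, c₂, rfl, hTeq₂, huv₂, huc₂, hvc₂⟩ := inner_edge_struct 𝒯 h₂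
    rw [edgeMid_pair huv₁, edgeMid_pair huv₂] at heq
    have hsub₁ : ({u₁, v₁} : Finset (ℤ × ℤ)) ⊆ T₁ := by
      rw [hTeq₁]; intro y hy
      simp only [Finset.mem_insert, Finset.mem_singleton] at hy ⊢; tauto
    have hsub₂ : ({u₂, v₂} : Finset (ℤ × ℤ)) ⊆ T₂ := by
      rw [hTeq₂]; intro y hy
      simp only [Finset.mem_insert, Finset.mem_singleton] at hy ⊢; tauto
    have hdet₁ := unimod_tri 𝒯 hT₁ (hsub₁ (by simp)) (hsub₁ (by simp))
      (by rw [hTeq₁]; simp : c₁ ∈ T₁) huv₁ huc₁ hvc₁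
    have hm₁ : midPt u₁ v₁ ∈ hull T₁ := mid_mem_hullT hsub₁
    have hm₂ : midPt u₁ v₁ ∈ hull T₂ := by rw [heq]; exact mid_mem_hullT hsub₂
    have hmF : midPt u₁ v₁ ∈ hull (T₁ ∩ T₂) := by
      rw [← 𝒯.glue T₁ hT₁ T₂ hT₂]
      exact ⟨hm₁, hm₂⟩
    obtain ⟨x, y, hxF, hyF, hxy, hmxy⟩ := half_mem_hull_face 𝒯 hT₁ Finset.inter_subset_left
      hmF (midPt_half u₁ v₁) (midPt_not_int hdet₁)
    have hxT₁ : x ∈ T₁ := (Finset.mem_inter.mp hxF).1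
    have hyT₁ : y ∈ T₁ := (Finset.mem_inter.mp hyF).1
    have hxT₂ : x ∈ T₂ := (Finset.mem_inter.mp hxF).2
    have hyT₂ : y ∈ T₂ := (Finset.mem_inter.mp hyF).2
    have he₁ : ({u₁, v₁} : Finset (ℤ × ℤ)) = {x, y} :=
      edge_unique_in_tri (𝒯.card3 T₁ hT₁) (hsub₁ (by simp)) (hsub₁ (by simp)) hxT₁ hyT₁
        huv₁ hxy (midPt_eq_iff hmxy)
    have he₂ : ({u₂, v₂} : Finset (ℤ × ℤ)) = {x, y} :=
      edge_unique_in_tri (𝒯.card3 T₂ hT₂) (hsub₂ (by simp)) (hsub₂ (by simp)) hxT₂ hyT₂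
        huv₂ hxy (midPt_eq_iff (heq.symm.trans hmxy))
    rw [he₁, he₂]
  · -- SurjOn
    intro m hm
    obtain ⟨⟨hmhalf, hmint⟩, hmin⟩ := hm
    have hmR : m ∈ P.region := interior_subset hmin
    have hmR' := hmR
    rw [← 𝒯.cover] at hmR'
    simp only [Set.mem_iUnion] at hmR'
    obtain ⟨T, hT, hmT⟩ := hmR'
    obtain ⟨a, b, c, hab, hac, hbc, hTeq⟩ := Finset.card_eq_three.mp (𝒯.card3 T hT)
    have key : ∀ p q : ℤ × ℤ, p ∈ T → q ∈ T → p ≠ q → m = midPt p q →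
        m ∈ edgeMid '' ↑𝒯.innerEdges := by
      intro p q hpT hqT hpq hmpq
      have hsub : ({p, q} : Finset (ℤ × ℤ)) ⊆ T := by
        intro y hy
        simp only [Finset.mem_insert, Finset.mem_singleton] at hy
        rcases hy with rfl | rfl <;> assumption
      have heE : ({p, q} : Finset (ℤ × ℤ)) ∈ 𝒯.edges := by
        rw [UnimodularTriangulation.edges, Finset.mem_biUnion]
        exact ⟨T, hT, Finset.mem_powersetCard.mpr ⟨hsub, Finset.card_pair hpq⟩⟩
      have hinner : ({p, q} : Finset (ℤ × ℤ)) ∈ 𝒯.innerEdges := by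
        rw [UnimodularTriangulation.innerEdges, Finset.mem_filter]
        refine ⟨heE, ?_⟩
        intro hfr
        have hmseg : m ∈ edgeSeg ({p, q} : Finset (ℤ × ℤ)) := by
          rw [edgeSeg_eq_hull, hull_pair, hmpq]
          exact midPt_mem_seg p q
        have hmfr : m ∈ frontier P.region := hfr hmseg
        rw [(R_closed 𝒯).frontier_eq] at hmfr
        exact hmfr.2 hmin
      exact ⟨{p, q}, Finset.mem_coe.mpr hinner, by rw [edgeMid_pair hpq, ← hmpq]⟩
    have hmT' : m ∈ convexHull ℝ ({toPt a, toPt b, toPt c} : Set Pt) := by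
      rw [← hull_triple, ← hTeq]
      exact hmT
    have haT : a ∈ T := by rw [hTeq]; simp
    have hbT : b ∈ T := by rw [hTeq]; simp
    have hcT : c ∈ T := by rw [hTeq]; simp
    have hdet := unimod_tri 𝒯 hT haT hbT hcT hab hac hbc
    rcases half_in_hull hdet hmT' hmhalf hmint with h | h | h
    · exact key a b haT hbT hab h
    · exact key a c haT hcT hac h
    · exact key b c hbT hcT hbc h
end
end

section
/- Let P be a lattice polygon and let M := ((1/2)ℤ² \ ℤ²) ∩ int(P). Every unimodular triangulation of P has exactly |M| inner (non-boundary) edges; in particular, any two unimodular triangulations of P have the same number of inner edges. -/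
noncomputable section

namespace Aux

/-- 2D cross product / determinant. -/
def dd (p q : Pt) : ℝ := p.1 * q.2 - p.2 * q.1

variable (A B C : Pt)

def detT : ℝ := dd (B - A) (C - A)
def bc (p : Pt) : ℝ := dd (p - A) (C - A) / detT A B C
def cc (p : Pt) : ℝ := dd (B - A) (p - A) / detT A B C

variable {A B C}

lemma comp_of_rep {a b c : ℝ} {p : Pt} (h : p = a • A + b • B + c • C) :
    p.1 = a * A.1 + b * B.1 + c * C.1 ∧ p.2 = a * A.2 + b * B.2 + c * C.2 := by
  rw [h]; constructor <;> simp [Prod.smul_fst, Prod.smul_snd]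

lemma coord_spec (hD : detT A B C ≠ 0) {a b c : ℝ} {p : Pt}
    (h : p = a • A + b • B + c • C) (hs : a + b + c = 1) :
    bc A B C p = b ∧ cc A B C p = c := by
  obtain ⟨h1, h2⟩ := comp_of_rep h
  have e1 : p.1 - A.1 = b * (B.1 - A.1) + c * (C.1 - A.1) := by linear_combination h1 + A.1 * hs
  have e2 : p.2 - A.2 = b * (B.2 - A.2) + c * (C.2 - A.2) := by linear_combination h2 + A.2 * hs
  constructor
  · rw [bc, div_eq_iff hD, dd, detT, dd]
    simp only [Prod.fst_sub, Prod.snd_sub]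
    linear_combination (C.2 - A.2) * e1 - (C.1 - A.1) * e2
  · rw [cc, div_eq_iff hD, dd, detT, dd]
    simp only [Prod.fst_sub, Prod.snd_sub]
    linear_combination (B.1 - A.1) * e2 - (B.2 - A.2) * e1

lemma rep_eq (hD : detT A B C ≠ 0) (p : Pt) :
    p = (1 - bc A B C p - cc A B C p) • A + bc A B C p • B + cc A B C p • C := by
  have hD' := hD
  simp only [detT, dd, Prod.fst_sub, Prod.snd_sub] at hD'
  have h : ∀ x y : Pt, (x = y) ↔ (x.1 = y.1 ∧ x.2 = y.2) := fun x y => Prod.ext_iff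
  rw [h]
  constructor <;>
  · simp only [Prod.fst_add, Prod.snd_add, Prod.smul_fst, Prod.smul_snd, smul_eq_mul,
      bc, cc, detT, dd, Prod.fst_sub, Prod.snd_sub]
    generalize hDD : (B.1 - A.1) * (C.2 - A.2) - (B.2 - A.2) * (C.1 - A.1) = D at hD' ⊢
    field_simp
    subst hDD
    ring

lemma exists_coords {p : Pt} (h : p ∈ convexHull ℝ ({A, B, C} : Set Pt)) :
    ∃ a b c : ℝ, 0 ≤ a ∧ 0 ≤ b ∧ 0 ≤ c ∧ a + b + c = 1 ∧ p = a • A + b • B + c • C := by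
  rw [show ({A, B, C} : Set Pt) = insert A {B, C} from rfl,
    convexHull_insert ⟨B, by simp⟩, convexHull_pair] at h
  rw [mem_convexJoin] at h
  obtain ⟨a', ha', z, hz, hp⟩ := h
  rw [Set.mem_singleton_iff] at ha'; subst ha'
  obtain ⟨r, r', hr, hr', hrs, hzeq⟩ := hz
  obtain ⟨w, w', hw, hw', hws, hpeq⟩ := hp
  refine ⟨w, w' * r, w' * r', hw, mul_nonneg hw' hr, mul_nonneg hw' hr', by nlinarith, ?_⟩
  rw [← hpeq, ← hzeq, smul_add, smul_smul, smul_smul, add_assoc]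

lemma mem_tri {a b c : ℝ} (ha : 0 ≤ a) (hb : 0 ≤ b) (hc : 0 ≤ c) (hs : a + b + c = 1) :
    a • A + b • B + c • C ∈ convexHull ℝ ({A, B, C} : Set Pt) := by
  rw [show ({A, B, C} : Set Pt) = insert A {B, C} from rfl,
    convexHull_insert ⟨B, by simp⟩, convexHull_pair, mem_convexJoin]
  rcases eq_or_lt_of_le (add_nonneg hb hc) with h0 | h0
  · have hb0 : b = 0 := by linarith
    have hc0 : c = 0 := by linarith
    have ha1 : a = 1 := by linarith
    refine ⟨A, rfl, B, left_mem_segment ℝ B C, ?_⟩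
    rw [ha1, hb0, hc0]
    simpa using left_mem_segment ℝ A B
  · refine ⟨A, rfl, (b / (b + c)) • B + (c / (b + c)) • C, ?_, ?_⟩
    · exact ⟨b / (b + c), c / (b + c), by positivity, by positivity, by field_simp, rfl⟩
    · refine ⟨a, b + c, ha, le_of_lt h0, by linarith, ?_⟩
      have hne : b + c ≠ 0 := ne_of_gt h0
      have e1 : (b + c) * (b / (b + c)) = b := by field_simp
      have e2 : (b + c) * (c / (b + c)) = c := by field_simp
      rw [smul_add, smul_smul, smul_smul, e1, e2, add_assoc]

lemma mem_tri_of (hD : detT A B C ≠ 0) {p : Pt} (hb : 0 ≤ bc A B C p) (hc : 0 ≤ cc A B C p)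
    (hbc : bc A B C p + cc A B C p ≤ 1) : p ∈ convexHull ℝ ({A, B, C} : Set Pt) := by
  rw [rep_eq hD p]
  exact mem_tri (by linarith) hb hc (by ring)

lemma coords_of_mem (hD : detT A B C ≠ 0) {p : Pt} (h : p ∈ convexHull ℝ ({A, B, C} : Set Pt)) :
    0 ≤ bc A B C p ∧ 0 ≤ cc A B C p ∧ bc A B C p + cc A B C p ≤ 1 := by
  obtain ⟨a, b, c, ha, hb, hc, hs, hp⟩ := exists_coords h
  obtain ⟨h1, h2⟩ := coord_spec hD hp hs
  rw [h1, h2]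
  exact ⟨hb, hc, by linarith⟩



-- ================= bridge lemmas =================

lemma toPt_injective : Function.Injective toPt := by
  intro a b h
  rw [toPt, toPt, Prod.ext_iff] at h
  simp only at h
  exact Prod.ext (by exact_mod_cast h.1) (by exact_mod_cast h.2)

/-- integer determinant of a lattice triangle -/
def dint (u v c : ℤ × ℤ) : ℤ := (v.1 - u.1) * (c.2 - u.2) - (c.1 - u.1) * (v.2 - u.2)

lemma detT_cast (u v c : ℤ × ℤ) :
    detT (toPt u) (toPt v) (toPt c) = ((dint u v c : ℤ) : ℝ) := by
  simp only [detT, dd, dint, toPt, Prod.fst_sub, Prod.snd_sub]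
  push_cast
  ring

lemma hull_triple (u v c : ℤ × ℤ) :
    hull ({u, v, c} : Finset (ℤ × ℤ)) = convexHull ℝ ({toPt u, toPt v, toPt c} : Set Pt) := by
  rw [hull]
  congr 1
  simp [Set.image_insert_eq]

lemma edgeSeg_pair (u v : ℤ × ℤ) :
    edgeSeg ({u, v} : Finset (ℤ × ℤ)) = segment ℝ (toPt u) (toPt v) := by
  rw [edgeSeg, ← convexHull_pair]
  congr 1
  simp [Set.image_insert_eq]

lemma edgeMid_pair {u v : ℤ × ℤ} (h : u ≠ v) :
    edgeMid ({u, v} : Finset (ℤ × ℤ)) = (2 : ℝ)⁻¹ • (toPt u + toPt v) := by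
  rw [edgeMid, Finset.sum_pair h]

/-- decompose a triangle containing a given edge -/
lemma third_vertex {e T : Finset (ℤ × ℤ)} (heT : e ⊆ T) (he : e.card = 2) (hT : T.card = 3) :
    ∃ c ∈ T, c ∉ e ∧ T = e ∪ {c} := by
  have h1 : (T \ e).card = 1 := by
    rw [Finset.card_sdiff_of_subset heT, he, hT]
  obtain ⟨c, hc⟩ := Finset.card_eq_one.mp h1
  have hcT : c ∈ T \ e := by rw [hc]; exact Finset.mem_singleton_self c
  rw [Finset.mem_sdiff] at hcT
  refine ⟨c, hcT.1, hcT.2, ?_⟩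
  rw [← hc, Finset.union_sdiff_of_subset heT]

/-- the midpoint of an edge of a unimodular triangle is a half-integer non-integer point -/
lemma mid_half_not_int {u v c : ℤ × ℤ} (h : |dint u v c| = 1) :
    (2 : ℝ)⁻¹ • (toPt u + toPt v) ∈ halfPts \ intPts := by
  constructor
  · constructor
    · exact ⟨u.1 + v.1, by simp [toPt]; push_cast; ring⟩
    · exact ⟨u.2 + v.2, by simp [toPt]; push_cast; ring⟩
  · rintro ⟨w, hw⟩
    rw [Prod.ext_iff] at hw
    simp only [toPt, Prod.smul_fst, Prod.smul_snd, Prod.fst_add, Prod.snd_add,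
      smul_eq_mul] at hw
    have h1 : 2 * w.1 = u.1 + v.1 := by
      have := hw.1
      have h2 : (2 * w.1 : ℝ) = ((u.1 + v.1 : ℤ) : ℝ) := by push_cast; linarith
      exact_mod_cast h2
    have h2 : 2 * w.2 = u.2 + v.2 := by
      have := hw.2
      have h2 : (2 * w.2 : ℝ) = ((u.2 + v.2 : ℤ) : ℝ) := by push_cast; linarith
      exact_mod_cast h2
    have hdvd : (2 : ℤ) ∣ dint u v c := by
      refine ⟨(w.1 - u.1) * (c.2 - u.2) - (c.1 - u.1) * (w.2 - u.2), ?_⟩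
      rw [dint]
      linear_combination (c.1 - u.1) * h2 - (c.2 - u.2) * h1
    rcases (abs_eq (by norm_num : (0:ℤ) ≤ 1)).mp h with h1 | h1 <;> rw [h1] at hdvd <;> omega

lemma rep_mid_AB (A B C : Pt) :
    (2:ℝ)⁻¹ • (A + B) = (2:ℝ)⁻¹ • A + (2:ℝ)⁻¹ • B + (0:ℝ) • C := by
  rw [smul_add, zero_smul, add_zero]

lemma rep_mid_AC (A B C : Pt) :
    (2:ℝ)⁻¹ • (A + C) = (2:ℝ)⁻¹ • A + (0:ℝ) • B + (2:ℝ)⁻¹ • C := by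
  rw [smul_add, zero_smul, add_zero]

lemma rep_mid_BC (A B C : Pt) :
    (2:ℝ)⁻¹ • (B + C) = (0:ℝ) • A + (2:ℝ)⁻¹ • B + (2:ℝ)⁻¹ • C := by
  rw [smul_add, zero_smul, zero_add]

lemma face_lemma {u v c : ℤ × ℤ}
    (hD : detT (toPt u) (toPt v) (toPt c) ≠ 0)
    {S : Finset (ℤ × ℤ)} (hS : S ⊆ ({u, v, c} : Finset (ℤ × ℤ)))
    {x : Pt} (hx : x ∈ convexHull ℝ (toPt '' ↑S))
    {a b g : ℝ} (hrep : x = a • toPt u + b • toPt v + g • toPt c)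
    (hsum : a + b + g = 1) (ha : 0 < a) (hb : 0 < b) :
    u ∈ S ∧ v ∈ S := by
  constructor
  · by_contra hu
    have hSsub : (toPt '' ↑S) ⊆ ({toPt v, toPt c} : Set Pt) := by
      rintro p ⟨w, hw, rfl⟩
      have hwS := hS hw
      simp only [Finset.mem_insert, Finset.mem_singleton] at hwS
      rcases hwS with rfl | rfl | rfl
      · exact absurd hw hu
      · exact Or.inl rfl
      · exact Or.inr rfl
    have hx2 : x ∈ segment ℝ (toPt v) (toPt c) := by
      rw [← convexHull_pair]
      exact convexHull_mono hSsub hx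
    obtain ⟨r, r', hr, hr', hrs, hre⟩ := hx2
    have hrep2 : x = (0:ℝ) • toPt u + r • toPt v + r' • toPt c := by
      rw [← hre, zero_smul, zero_add]
    have c1 := coord_spec hD hrep hsum
    have c2 := coord_spec hD hrep2 (by linarith)
    have hb' : b = r := c1.1.symm.trans c2.1
    have hg' : g = r' := c1.2.symm.trans c2.2
    linarith
  · by_contra hv
    have hSsub : (toPt '' ↑S) ⊆ ({toPt u, toPt c} : Set Pt) := by
      rintro p ⟨w, hw, rfl⟩
      have hwS := hS hw
      simp only [Finset.mem_insert, Finset.mem_singleton] at hwS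
      rcases hwS with rfl | rfl | rfl
      · exact Or.inl rfl
      · exact absurd hw hv
      · exact Or.inr rfl
    have hx2 : x ∈ segment ℝ (toPt u) (toPt c) := by
      rw [← convexHull_pair]
      exact convexHull_mono hSsub hx
    obtain ⟨r, r', hr, hr', hrs, hre⟩ := hx2
    have hrep2 : x = r • toPt u + (0:ℝ) • toPt v + r' • toPt c := by
      rw [← hre, zero_smul, add_zero]
    have c1 := coord_spec hD hrep hsum
    have c2 := coord_spec hD hrep2 (by linarith)
    have hb' : b = 0 := c1.1.symm.trans c2.1
    linarith

lemma pair_unique {u v c : ℤ × ℤ}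
    (hD : detT (toPt u) (toPt v) (toPt c) ≠ 0)
    {x y : ℤ × ℤ} (hx : x ∈ ({u, v, c} : Finset (ℤ × ℤ)))
    (hy : y ∈ ({u, v, c} : Finset (ℤ × ℤ))) (hxy : x ≠ y)
    (hm : (2:ℝ)⁻¹ • (toPt x + toPt y) = (2:ℝ)⁻¹ • (toPt u + toPt v)) :
    ({x, y} : Finset (ℤ × ℤ)) = {u, v} := by
  have e1 := coord_spec hD (rep_mid_AB (toPt u) (toPt v) (toPt c)) (by norm_num)
  have hAC : ¬ ((2:ℝ)⁻¹ • (toPt u + toPt c) = (2:ℝ)⁻¹ • (toPt u + toPt v)) := by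
    intro h
    have h2 : (2:ℝ)⁻¹ • (toPt u + toPt v)
        = (2:ℝ)⁻¹ • toPt u + (0:ℝ) • toPt v + (2:ℝ)⁻¹ • toPt c := by
      rw [← h]; exact rep_mid_AC _ _ _
    have e2 := coord_spec hD h2 (by norm_num)
    have := e1.2.symm.trans e2.2
    norm_num at this
  have hBC : ¬ ((2:ℝ)⁻¹ • (toPt v + toPt c) = (2:ℝ)⁻¹ • (toPt u + toPt v)) := by
    intro h
    have h2 : (2:ℝ)⁻¹ • (toPt u + toPt v)
        = (0:ℝ) • toPt u + (2:ℝ)⁻¹ • toPt v + (2:ℝ)⁻¹ • toPt c := by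
      rw [← h]; exact rep_mid_BC _ _ _
    have e2 := coord_spec hD h2 (by norm_num)
    have := e1.2.symm.trans e2.2
    norm_num at this
  simp only [Finset.mem_insert, Finset.mem_singleton] at hx hy
  rcases hx with h1 | h1 | h1 <;> rcases hy with h2 | h2 | h2
  · exact absurd (h1.trans h2.symm) hxy
  · rw [h1, h2]
  · rw [h1, h2] at hm; exact absurd hm hAC
  · rw [h1, h2]; exact Finset.pair_comm v u
  · exact absurd (h1.trans h2.symm) hxy
  · rw [h1, h2] at hm; exact absurd hm hBC
  · rw [h1, h2, add_comm] at hm; exact absurd hm hAC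
  · rw [h1, h2, add_comm] at hm; exact absurd hm hBC
  · exact absurd (h1.trans h2.symm) hxy

lemma half_point_classify {u v c : ℤ × ℤ} (hD1 : |dint u v c| = 1)
    {m : Pt} (hm : m ∈ convexHull ℝ ({toPt u, toPt v, toPt c} : Set Pt))
    (hhalf : m ∈ halfPts) (hint : m ∉ intPts) :
    m = (2:ℝ)⁻¹ • (toPt u + toPt v) ∨ m = (2:ℝ)⁻¹ • (toPt u + toPt c) ∨
      m = (2:ℝ)⁻¹ • (toPt v + toPt c) := by
  have hD : detT (toPt u) (toPt v) (toPt c) ≠ 0 := by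
    rw [detT_cast]
    simp only [ne_eq, Int.cast_eq_zero]
    intro h
    rw [h] at hD1
    norm_num at hD1
  obtain ⟨⟨p, hp⟩, ⟨q, hq⟩⟩ := hhalf
  obtain ⟨hb0, hg0, hbg⟩ := coords_of_mem hD hm
  set b := bc (toPt u) (toPt v) (toPt c) m with hbdef
  set g := cc (toPt u) (toPt v) (toPt c) m with hgdef
  have hrep := rep_eq hD m
  rw [← hbdef, ← hgdef] at hrep
  -- 2b and 2g are integers
  have key : ∀ ε : ℤ, dint u v c = ε → (∃ kb : ℤ, (kb : ℝ) = 2 * b) ∧ (∃ kg : ℤ, (kg : ℝ) = 2 * g) := by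
    intro ε hε
    constructor
    all_goals {
      have hε1 : ε = 1 ∨ ε = -1 := by
        rcases (abs_eq (by norm_num : (0:ℤ) ≤ 1)).mp hD1 with h | h <;>
          [left; right] <;> omega
      have hεsq : ((ε:ℤ) : ℝ) * ((ε:ℤ) : ℝ) = 1 := by
        rcases hε1 with rfl | rfl <;> norm_num
      have hεinv : (((ε:ℤ) : ℝ))⁻¹ = ((ε:ℤ) : ℝ) := inv_eq_of_mul_eq_one_left hεsq
      first
      | refine ⟨ε * ((p - 2 * u.1) * (c.2 - u.2) - (q - 2 * u.2) * (c.1 - u.1)), ?_⟩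
        rw [hbdef, bc, detT_cast, hε, div_eq_mul_inv, hεinv]
      | refine ⟨ε * ((v.1 - u.1) * (q - 2 * u.2) - (v.2 - u.2) * (p - 2 * u.1)), ?_⟩
        rw [hgdef, cc, detT_cast, hε, div_eq_mul_inv, hεinv]
      simp only [dd, Prod.fst_sub, Prod.snd_sub, toPt]
      rw [hp, hq]
      push_cast
      ring }
  obtain ⟨⟨kb, hkb⟩, ⟨kg, hkg⟩⟩ := key (dint u v c) rfl
  have hkb0 : 0 ≤ kb := by
    have : (0:ℝ) ≤ (kb:ℝ) := by rw [hkb]; linarith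
    exact_mod_cast this
  have hkg0 : 0 ≤ kg := by
    have : (0:ℝ) ≤ (kg:ℝ) := by rw [hkg]; linarith
    exact_mod_cast this
  have hsum2 : kb + kg ≤ 2 := by
    have : ((kb + kg : ℤ) : ℝ) ≤ 2 := by push_cast; rw [hkb, hkg]; linarith
    exact_mod_cast this
  have hkb2 : kb ≤ 2 := by omega
  have hkg2 : kg ≤ 2 := by omega
  have hb2 : b = (kb : ℝ) / 2 := by rw [hkb]; ring
  have hg2 : g = (kg : ℝ) / 2 := by rw [hkg]; ring
  clear hkb hkg hbdef hgdef hb0 hg0 hbg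
  interval_cases kb <;> interval_cases kg <;> push_cast at hb2 hg2 <;>
    first
    | (exfalso; omega)
    | (exfalso
       apply hint
       refine ⟨u, ?_⟩
       rw [hrep, hb2, hg2]
       norm_num
       done)
    | (exfalso
       apply hint
       refine ⟨v, ?_⟩
       rw [hrep, hb2, hg2]
       norm_num
       done)
    | (exfalso
       apply hint
       refine ⟨c, ?_⟩
       rw [hrep, hb2, hg2]
       norm_num
       done)
    | (left
       rw [hrep, hb2, hg2, rep_mid_AB (toPt u) (toPt v) (toPt c)]
       norm_num
       done)
    | (right; left
       rw [hrep, hb2, hg2, rep_mid_AC (toPt u) (toPt v) (toPt c)]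
       norm_num
       done)
    | (right; right
       rw [hrep, hb2, hg2, rep_mid_BC (toPt u) (toPt v) (toPt c)]
       norm_num
       done)

lemma detT_ne_zero {u v c : ℤ × ℤ} (h : |dint u v c| = 1) :
    detT (toPt u) (toPt v) (toPt c) ≠ 0 := by
  rw [detT_cast]
  simp only [ne_eq, Int.cast_eq_zero]
  intro h0
  rw [h0] at h
  norm_num at h

lemma bc_continuous (A B C : Pt) : Continuous (fun p => bc A B C p) := by
  unfold bc dd
  fun_prop

lemma cc_continuous (A B C : Pt) : Continuous (fun p => cc A B C p) := by
  unfold cc dd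
  fun_prop

lemma mid_mem_interior_union {A B C C' : Pt}
    (hD : detT A B C ≠ 0) (hD' : detT A B C' ≠ 0)
    (hsign : detT A B C * detT A B C' < 0) :
    (2:ℝ)⁻¹ • (A + B) ∈
      interior (convexHull ℝ ({A, B, C} : Set Pt) ∪
        convexHull ℝ ({A, B, C'} : Set Pt)) := by
  set U : Set Pt := ({p | 0 < bc A B C p} ∩ {p | bc A B C p + cc A B C p < 1}) ∩
    ({p | 0 < bc A B C' p} ∩ {p | bc A B C' p + cc A B C' p < 1}) with hU
  have hUopen : IsOpen U := by
    refine IsOpen.inter (IsOpen.inter ?_ ?_) (IsOpen.inter ?_ ?_)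
    · exact isOpen_lt continuous_const (bc_continuous A B C)
    · exact isOpen_lt ((bc_continuous A B C).add (cc_continuous A B C)) continuous_const
    · exact isOpen_lt continuous_const (bc_continuous A B C')
    · exact isOpen_lt ((bc_continuous A B C').add (cc_continuous A B C')) continuous_const
  have hmU : (2:ℝ)⁻¹ • (A + B) ∈ U := by
    have e1 := coord_spec hD (rep_mid_AB A B C) (by norm_num)
    have e2 := coord_spec hD' (rep_mid_AB A B C') (by norm_num)
    refine ⟨⟨?_, ?_⟩, ?_, ?_⟩ <;>
      simp only [Set.mem_setOf_eq, e1.1, e1.2, e2.1, e2.2] <;> norm_num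
  have hUsub : U ⊆ convexHull ℝ ({A, B, C} : Set Pt) ∪ convexHull ℝ ({A, B, C'} : Set Pt) := by
    rintro p ⟨⟨hb1, hs1⟩, hb1', hs1'⟩
    simp only [Set.mem_setOf_eq] at hb1 hs1 hb1' hs1'
    rcases le_or_gt 0 (cc A B C p) with h | h
    · exact Or.inl (mem_tri_of hD hb1.le h (by linarith))
    · refine Or.inr (mem_tri_of hD' hb1'.le ?_ (by linarith))
      have heq : cc A B C' p = cc A B C p * (detT A B C / detT A B C') := by
        rw [cc, cc]
        field_simp
      rw [heq]
      have hdd : detT A B C / detT A B C' < 0 := by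
        rcases mul_neg_iff.mp hsign with ⟨h1, h2⟩ | ⟨h1, h2⟩
        · exact div_neg_of_pos_of_neg h1 h2
        · exact div_neg_of_neg_of_pos h1 h2
      exact le_of_lt (mul_pos_of_neg_of_neg h hdd)
  exact interior_maximal hUsub hUopen hmU

lemma dd_shift (A B C : Pt) (s tk : ℝ) :
    dd (B - A) ((((1-s) • A + s • B) + tk • (A - C)) - A) = -tk * detT A B C := by
  simp only [dd, detT, Prod.fst_add, Prod.fst_sub, Prod.smul_fst, smul_eq_mul,
    Prod.snd_add, Prod.snd_sub, Prod.smul_snd]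
  ring

lemma hull_sub_R {R : Set Pt} (𝒯 : UnimodularTriangulation R) {T : Finset (ℤ × ℤ)}
    (hT : T ∈ 𝒯.tris) : hull T ⊆ R := by
  rw [← 𝒯.cover]
  exact Set.subset_biUnion_of_mem hT

lemma edge_data {R : Set Pt} (𝒯 : UnimodularTriangulation R) {e : Finset (ℤ × ℤ)}
    (he : e ∈ 𝒯.edges) :
    ∃ u v c : ℤ × ℤ, ∃ T ∈ 𝒯.tris, e = {u, v} ∧ u ≠ v ∧ T = {u, v, c} ∧
      u ≠ c ∧ v ≠ c := by
  rw [UnimodularTriangulation.edges, Finset.mem_biUnion] at he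
  obtain ⟨T, hT, heT⟩ := he
  rw [Finset.mem_powersetCard] at heT
  obtain ⟨hsub, hcard⟩ := heT
  obtain ⟨u, v, huv, rfl⟩ := Finset.card_eq_two.mp hcard
  obtain ⟨c, hcT, hce, hTe⟩ := third_vertex hsub hcard (𝒯.card3 T hT)
  have hTuvc : T = ({u, v, c} : Finset (ℤ × ℤ)) := by
    rw [hTe]
    ext a
    simp only [Finset.mem_union, Finset.mem_insert, Finset.mem_singleton]
    tauto
  refine ⟨u, v, c, T, hT, rfl, huv, hTuvc, ?_, ?_⟩
  · rintro rfl; exact hce (Finset.mem_insert_self _ _)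
  · rintro rfl; exact hce (Finset.mem_insert_of_mem (Finset.mem_singleton_self _))

lemma mid_inner {R : Set Pt} (𝒯 : UnimodularTriangulation R) {e : Finset (ℤ × ℤ)}
    (he : e ∈ 𝒯.innerEdges) : edgeMid e ∈ (halfPts \ intPts) ∩ interior R := by
  classical
  rw [UnimodularTriangulation.innerEdges, Finset.mem_filter] at he
  obtain ⟨heE, hnb⟩ := he
  obtain ⟨u, v, c, T, hT, rfl, huv, hTuvc, huc, hvc⟩ := edge_data 𝒯 heE
  set A := toPt u with hA
  set B := toPt v with hB
  set C := toPt c with hC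
  have hu_mem : u ∈ T := by rw [hTuvc]; simp
  have hv_mem : v ∈ T := by rw [hTuvc]; simp
  have hc_mem : c ∈ T := by rw [hTuvc]; simp
  have hdint : |dint u v c| = 1 := 𝒯.unimodular T hT u hu_mem v hv_mem c hc_mem huv huc hvc
  have hD : detT A B C ≠ 0 := detT_ne_zero hdint
  have hhT : hull T = convexHull ℝ ({A, B, C} : Set Pt) := by rw [hTuvc, hull_triple]
  rw [edgeMid_pair huv]
  refine ⟨mid_half_not_int hdint, ?_⟩
  -- a point of the edge is in the interior of R
  obtain ⟨x₀, hx₀seg, hx₀f⟩ := Set.not_subset.mp hnb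
  rw [edgeSeg_pair] at hx₀seg
  have hsegT : segment ℝ A B ⊆ hull T := by
    rw [hhT, ← convexHull_pair]
    exact convexHull_mono (by intro z hz; simp only [Set.mem_insert_iff,
      Set.mem_singleton_iff] at hz ⊢; tauto)
  have hx₀int : x₀ ∈ interior R := by
    have hcl : x₀ ∈ closure R := subset_closure (hull_sub_R 𝒯 hT (hsegT hx₀seg))
    by_contra h
    exact hx₀f ⟨hcl, h⟩
  obtain ⟨a₀, s₀, ha₀, hs₀, hsum₀, heq₀⟩ := hx₀seg
  have hs₀le1 : s₀ ≤ 1 := by linarith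
  obtain ⟨r, hr, hball⟩ := Metric.isOpen_iff.mp isOpen_interior x₀ hx₀int
  set δ : ℝ := min (r / (‖B - A‖ + 1)) (1/4) with hδ
  have hδpos : 0 < δ := by
    apply lt_min
    · positivity
    · norm_num
  have hδle : δ ≤ r / (‖B - A‖ + 1) := min_le_left _ _
  have hδle4 : δ ≤ 1/4 := min_le_right _ _
  set s : ℝ := if s₀ < 1/2 then s₀ + δ/2 else s₀ - δ/2 with hs
  have hs0 : 0 < s := by
    rw [hs]; split_ifs with h
    · linarith
    · push_neg at h; linarith
  have hs1 : s < 1 := by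
    rw [hs]; split_ifs with h
    · linarith
    · linarith
  have habs : |s - s₀| = δ/2 := by
    rw [hs]; split_ifs with h
    · rw [show s₀ + δ/2 - s₀ = δ/2 by ring, abs_of_pos (by linarith)]
    · rw [show s₀ - δ/2 - s₀ = -(δ/2) by ring, abs_neg, abs_of_pos (by linarith)]
  set x : Pt := (1-s) • A + s • B with hx
  have hxsub : x - x₀ = (s - s₀) • (B - A) := by
    rw [hx, ← heq₀]
    have ha₀' : a₀ = 1 - s₀ := by linarith
    rw [ha₀']
    rw [Prod.ext_iff]
    constructor <;>
      simp only [Prod.fst_add, Prod.fst_sub, Prod.smul_fst, smul_eq_mul,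
        Prod.snd_add, Prod.snd_sub, Prod.smul_snd] <;> ring
  have hx_int : x ∈ interior R := by
    apply hball
    rw [Metric.mem_ball, dist_eq_norm, hxsub, norm_smul, Real.norm_eq_abs, habs]
    have hn : (0:ℝ) ≤ ‖B - A‖ := norm_nonneg _
    have h2 : δ * (‖B - A‖ + 1) ≤ r := by
      have h3 := hδle
      rw [le_div_iff₀ (by positivity : (0:ℝ) < ‖B - A‖ + 1)] at h3
      exact h3
    nlinarith
  have hrepx : x = (1-s) • A + s • B + (0:ℝ) • C := by rw [hx, zero_smul, add_zero]
  have hx_hullT : x ∈ hull T := by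
    rw [hhT, hrepx]
    exact mem_tri (by linarith) (le_of_lt hs0) le_rfl (by ring)
  -- points just off the edge, near x
  obtain ⟨r', hr', hball'⟩ := Metric.isOpen_iff.mp isOpen_interior x hx_int
  set ν : Pt := A - C with hν
  set t : ℕ → ℝ := fun k => r' / (‖ν‖ + 1) / (k + 1) with ht
  have htpos : ∀ k : ℕ, 0 < t k := by
    intro k
    rw [ht]
    have : (0:ℝ) < (k:ℝ) + 1 := by positivity
    positivity
  set q : ℕ → Pt := fun k => x + t k • ν with hq
  have hqdist : ∀ k, dist x (q k) < r' / (k + 1) := by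
    intro k
    rw [dist_comm, dist_eq_norm, hq]
    simp only
    rw [add_sub_cancel_left, norm_smul, Real.norm_eq_abs, abs_of_pos (htpos k), ht]
    simp only
    have hn : (0:ℝ) ≤ ‖ν‖ := norm_nonneg _
    have hk : (0:ℝ) < (k:ℝ) + 1 := by positivity
    rw [div_div, div_mul_eq_mul_div, div_lt_div_iff₀ (by positivity) hk]
    nlinarith
  have hq_int : ∀ k, q k ∈ interior R := by
    intro k
    apply hball'
    rw [Metric.mem_ball, dist_comm]
    have h1 : r' / ((k:ℝ) + 1) ≤ r' := div_le_self (le_of_lt hr')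
      (by exact_mod_cast Nat.one_le_iff_ne_zero.mpr (Nat.succ_ne_zero k) : (1:ℝ) ≤ (k:ℝ) + 1)
    exact lt_of_lt_of_le (hqdist k) h1
  -- pigeonhole : one triangle contains infinitely many q k
  have hex : ∀ k : ℕ, ∃ T' : {T' // T' ∈ 𝒯.tris}, q k ∈ hull T'.1 := by
    intro k
    have hqR : q k ∈ R := interior_subset (hq_int k)
    rw [← 𝒯.cover, Set.mem_iUnion₂] at hqR
    obtain ⟨T', hT', hqT'⟩ := hqR
    exact ⟨⟨T', hT'⟩, hqT'⟩
  choose g hg using hex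
  obtain ⟨T'', hfibI⟩ := Finite.exists_infinite_fiber g
  have hfib : (g ⁻¹' {T''}).Infinite := Set.infinite_coe_iff.mp hfibI
  -- x is in the hull of T''
  have hx_hullT'' : x ∈ hull T''.1 := by
    have hclosed : IsClosed (hull T''.1) :=
      (((Finset.finite_toSet _).image toPt).isCompact_convexHull ℝ).isClosed
    rw [← hclosed.closure_eq]
    rw [Metric.mem_closure_iff]
    intro ε hε
    obtain ⟨k, hkfib, hk⟩ := hfib.exists_gt ⌈r' / ε⌉₊
    have hgk : g k = T'' := hkfib
    refine ⟨q k, by rw [← hgk]; exact hg k, ?_⟩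
    have h1 : r' / ε < (k:ℝ) := lt_of_le_of_lt (Nat.le_ceil _) (by exact_mod_cast hk)
    have h2 : r' / ((k:ℝ) + 1) < ε := by
      rw [div_lt_iff₀ (by positivity)]
      have := (div_lt_iff₀ hε).mp h1
      nlinarith
    exact lt_trans (hqdist k) h2
  -- x is in the shared face, so the edge {u,v} lies in T''
  have hxface : x ∈ hull (T ∩ T''.1) := by
    rw [← 𝒯.glue T hT T''.1 T''.2]
    exact ⟨hx_hullT, hx_hullT''⟩
  have hSsub : T ∩ T''.1 ⊆ ({u, v, c} : Finset (ℤ × ℤ)) := by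
    rw [← hTuvc]
    exact Finset.inter_subset_left
  have hface := face_lemma hD hSsub
    (by rw [hull] at hxface; exact hxface) hrepx (by ring) (by linarith) hs0
  have huT'' : u ∈ T''.1 := (Finset.mem_inter.mp hface.1).2
  have hvT'' : v ∈ T''.1 := (Finset.mem_inter.mp hface.2).2
  -- third vertex of T''
  have hsub'' : ({u, v} : Finset (ℤ × ℤ)) ⊆ T''.1 := by
    intro a ha
    simp only [Finset.mem_insert, Finset.mem_singleton] at ha
    rcases ha with rfl | rfl
    · exact huT''
    · exact hvT''
  obtain ⟨c'', hc''T, hc''e, hT''e⟩ := third_vertex hsub'' (Finset.card_pair huv)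
    (𝒯.card3 T''.1 T''.2)
  have hT''uvc : T''.1 = ({u, v, c''} : Finset (ℤ × ℤ)) := by
    rw [hT''e]
    ext a
    simp only [Finset.mem_union, Finset.mem_insert, Finset.mem_singleton]
    tauto
  have huc'' : u ≠ c'' := by rintro rfl; exact hc''e (Finset.mem_insert_self _ _)
  have hvc'' : v ≠ c'' := by
    rintro rfl; exact hc''e (Finset.mem_insert_of_mem (Finset.mem_singleton_self _))
  have hu_mem'' : u ∈ T''.1 := huT''
  have hc_mem'' : c'' ∈ T''.1 := hc''T
  have hdint'' : |dint u v c''| = 1 :=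
    𝒯.unimodular T''.1 T''.2 u huT'' v hvT'' c'' hc''T huv huc'' hvc''
  set C'' := toPt c'' with hC''
  have hD'' : detT A B C'' ≠ 0 := detT_ne_zero hdint''
  have hhT'' : hull T''.1 = convexHull ℝ ({A, B, C''} : Set Pt) := by
    rw [hT''uvc, hull_triple]
  -- sign of the determinant of T'' is opposite
  obtain ⟨k₀, hk₀⟩ := hfib.nonempty
  have hgk₀ : g k₀ = T'' := hk₀
  have hqk₀ : q k₀ ∈ convexHull ℝ ({A, B, C''} : Set Pt) := by
    rw [← hhT'', ← hgk₀]; exact hg k₀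
  have hcc₀ := (coords_of_mem hD'' hqk₀).2.1
  have hccval : cc A B C'' (q k₀) = -(t k₀) * detT A B C / detT A B C'' := by
    have hq' : q k₀ = (((1-s) • A + s • B) + t k₀ • (A - C)) := by rw [hq]
    rw [hq', cc, dd_shift]
  rw [hccval] at hcc₀
  have hDD : detT A B C * detT A B C'' < 0 := by
    have hexp : (-(t k₀) * detT A B C / detT A B C'') * (detT A B C'')^2 =
        -(t k₀) * (detT A B C * detT A B C'') := by
      field_simp
    have h2 : 0 ≤ -(t k₀) * (detT A B C * detT A B C'') := by
      rw [← hexp]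
      exact mul_nonneg hcc₀ (sq_nonneg _)
    have h3 : detT A B C * detT A B C'' ≤ 0 := by nlinarith [htpos k₀]
    rcases lt_or_eq_of_le h3 with h | h
    · exact h
    · exact absurd h (mul_ne_zero hD hD'')
  -- conclude : the midpoint is interior to the union of the two triangles
  have hmem := mid_mem_interior_union hD hD'' hDD
  have hsubR : convexHull ℝ ({A, B, C} : Set Pt) ∪ convexHull ℝ ({A, B, C''} : Set Pt) ⊆ R :=
    Set.union_subset (by rw [← hhT]; exact hull_sub_R 𝒯 hT)
      (by rw [← hhT'']; exact hull_sub_R 𝒯 T''.2)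
  exact interior_mono hsubR hmem

lemma mid_mem_segment' (X Y : Pt) : (2:ℝ)⁻¹ • (X + Y) ∈ segment ℝ X Y :=
  ⟨2⁻¹, 2⁻¹, by norm_num, by norm_num, by norm_num, (smul_add (2:ℝ)⁻¹ X Y).symm⟩

lemma seg_sub_hull {u v c : ℤ × ℤ} :
    segment ℝ (toPt u) (toPt v) ⊆ convexHull ℝ ({toPt u, toPt v, toPt c} : Set Pt) := by
  rw [← convexHull_pair]
  exact convexHull_mono (by
    intro z hz
    simp only [Set.mem_insert_iff, Set.mem_singleton_iff] at hz ⊢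
    tauto)

lemma mid_injOn {R : Set Pt} (𝒯 : UnimodularTriangulation R) :
    Set.InjOn edgeMid ↑𝒯.innerEdges := by
  classical
  intro e₁ he₁ e₂ he₂ hmid
  rw [Finset.mem_coe, UnimodularTriangulation.innerEdges, Finset.mem_filter] at he₁ he₂
  obtain ⟨u₁, v₁, c₁, T₁, hT₁, rfl, huv₁, hT₁e, huc₁, hvc₁⟩ := edge_data 𝒯 he₁.1
  obtain ⟨u₂, v₂, c₂, T₂, hT₂, rfl, huv₂, hT₂e, huc₂, hvc₂⟩ := edge_data 𝒯 he₂.1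
  rw [edgeMid_pair huv₁, edgeMid_pair huv₂] at hmid
  have hu₁ : u₁ ∈ T₁ := by rw [hT₁e]; simp
  have hv₁ : v₁ ∈ T₁ := by rw [hT₁e]; simp
  have hc₁ : c₁ ∈ T₁ := by rw [hT₁e]; simp
  have hu₂ : u₂ ∈ T₂ := by rw [hT₂e]; simp
  have hv₂ : v₂ ∈ T₂ := by rw [hT₂e]; simp
  have hc₂ : c₂ ∈ T₂ := by rw [hT₂e]; simp
  have hdint₁ : |dint u₁ v₁ c₁| = 1 :=
    𝒯.unimodular T₁ hT₁ u₁ hu₁ v₁ hv₁ c₁ hc₁ huv₁ huc₁ hvc₁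
  have hdint₂ : |dint u₂ v₂ c₂| = 1 :=
    𝒯.unimodular T₂ hT₂ u₂ hu₂ v₂ hv₂ c₂ hc₂ huv₂ huc₂ hvc₂
  have hD₁ : detT (toPt u₁) (toPt v₁) (toPt c₁) ≠ 0 := detT_ne_zero hdint₁
  have hD₂ : detT (toPt u₂) (toPt v₂) (toPt c₂) ≠ 0 := detT_ne_zero hdint₂
  have hm1 : (2:ℝ)⁻¹ • (toPt u₁ + toPt v₁) ∈ hull T₁ := by
    rw [hT₁e, hull_triple]
    exact seg_sub_hull (mid_mem_segment' _ _)
  have hm2 : (2:ℝ)⁻¹ • (toPt u₁ + toPt v₁) ∈ hull T₂ := by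
    rw [hT₂e, hull_triple, hmid]
    exact seg_sub_hull (mid_mem_segment' _ _)
  have hface : (2:ℝ)⁻¹ • (toPt u₁ + toPt v₁) ∈ hull (T₁ ∩ T₂) := by
    rw [← 𝒯.glue T₁ hT₁ T₂ hT₂]
    exact ⟨hm1, hm2⟩
  have hS₁ : T₁ ∩ T₂ ⊆ ({u₁, v₁, c₁} : Finset (ℤ × ℤ)) := by
    rw [← hT₁e]
    exact Finset.inter_subset_left
  have hrep₁ : (2:ℝ)⁻¹ • (toPt u₁ + toPt v₁)
      = (2:ℝ)⁻¹ • toPt u₁ + (2:ℝ)⁻¹ • toPt v₁ + (0:ℝ) • toPt c₁ :=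
    rep_mid_AB _ _ _
  have hf₁ := face_lemma hD₁ hS₁ (by rw [hull] at hface; exact hface) hrep₁
    (by norm_num) (by norm_num) (by norm_num)
  have hu₁T₂ : u₁ ∈ T₂ := (Finset.mem_inter.mp hf₁.1).2
  have hv₁T₂ : v₁ ∈ T₂ := (Finset.mem_inter.mp hf₁.2).2
  exact pair_unique hD₂ (hT₂e ▸ hu₁T₂) (hT₂e ▸ hv₁T₂) huv₁ hmid

lemma mid_surj {R : Set Pt} (𝒯 : UnimodularTriangulation R) {m : Pt}
    (hm : m ∈ (halfPts \ intPts) ∩ interior R) :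
    ∃ e ∈ 𝒯.innerEdges, edgeMid e = m := by
  classical
  obtain ⟨⟨hhalf, hint⟩, hintR⟩ := hm
  have hmR : m ∈ R := interior_subset hintR
  rw [← 𝒯.cover, Set.mem_iUnion₂] at hmR
  obtain ⟨T, hT, hmT⟩ := hmR
  obtain ⟨a, b, c, hab, hac, hbc, hTabc⟩ := Finset.card_eq_three.mp (𝒯.card3 T hT)
  have ha : a ∈ T := by rw [hTabc]; simp
  have hb : b ∈ T := by rw [hTabc]; simp
  have hc : c ∈ T := by rw [hTabc]; simp
  have hdint : |dint a b c| = 1 := 𝒯.unimodular T hT a ha b hb c hc hab hac hbc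
  have hmT' : m ∈ convexHull ℝ ({toPt a, toPt b, toPt c} : Set Pt) := by
    rw [← hull_triple, ← hTabc]
    exact hmT
  have hmkedge : ∀ x y : ℤ × ℤ, x ∈ T → y ∈ T → x ≠ y →
      m = (2:ℝ)⁻¹ • (toPt x + toPt y) → ∃ e ∈ 𝒯.innerEdges, edgeMid e = m := by
    intro x y hx hy hxy hmeq
    refine ⟨{x, y}, ?_, by rw [edgeMid_pair hxy, hmeq]⟩
    rw [UnimodularTriangulation.innerEdges, Finset.mem_filter]
    constructor
    · rw [UnimodularTriangulation.edges, Finset.mem_biUnion]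
      refine ⟨T, hT, ?_⟩
      rw [Finset.mem_powersetCard]
      refine ⟨?_, Finset.card_pair hxy⟩
      intro z hz
      simp only [Finset.mem_insert, Finset.mem_singleton] at hz
      rcases hz with rfl | rfl
      · exact hx
      · exact hy
    · intro hsub
      have hmseg : m ∈ edgeSeg ({x, y} : Finset (ℤ × ℤ)) := by
        rw [edgeSeg_pair, hmeq]
        exact mid_mem_segment' _ _
      exact (hsub hmseg).2 hintR
  rcases half_point_classify hdint hmT' hhalf hint with h | h | h
  · exact hmkedge a b ha hb hab h
  · exact hmkedge a c ha hc hac h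
  · exact hmkedge b c hb hc hbc h

lemma count {R : Set Pt} (𝒯 : UnimodularTriangulation R) :
    𝒯.innerEdges.card = ((halfPts \ intPts) ∩ interior R).ncard := by
  have himg : edgeMid '' ↑𝒯.innerEdges = (halfPts \ intPts) ∩ interior R := by
    apply Set.eq_of_subset_of_subset
    · rintro p ⟨e, he, rfl⟩
      exact mid_inner 𝒯 (Finset.mem_coe.mp he)
    · intro p hp
      obtain ⟨e, he, hem⟩ := mid_surj 𝒯 hp
      exact ⟨e, Finset.mem_coe.mpr he, hem⟩
  rw [← himg, Set.ncard_image_of_injOn (mid_injOn 𝒯), Set.ncard_coe_finset]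

end Aux

/-- every unimodular triangulation of a lattice polygon `P` has exactly
`|M|` inner edges, where `M = ((1/2)ℤ² \ ℤ²) ∩ int P`; in particular any two
unimodular triangulations of `P` have the same number of inner edges. -/
theorem inner_edges_count_eq_Mset (P : LatticePolygon) :
    (∀ 𝒯 : UnimodularTriangulation P.region, 𝒯.innerEdges.card = (Mset P).ncard) ∧
    (∀ 𝒯₁ 𝒯₂ : UnimodularTriangulation P.region,
      𝒯₁.innerEdges.card = 𝒯₂.innerEdges.card) := by
  constructor
  · intro 𝒯
    exact Aux.count 𝒯
  · intro 𝒯₁ 𝒯₂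
    rw [Aux.count 𝒯₁, Aux.count 𝒯₂]
end
end
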